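/- arXiv:2407.11166 — 9 statements merged into one kernel-verified Lean document; each statement's English description precedes it below -/
import Mathlib

section
/- Let α be an irrational real number and let p and q be relatively prime integers with q > 0. If q·|qα − p| < 2/3, then p/q is either a convergent of α or a first mediant of α. -/
open GenContFract

/-- `x` is a convergent of the simple continued fraction expansion of `α`. -/
def Real.IsConvergentOf (α x : ℝ) : Prop :=
  ∃ n : ℕ, (GenContFract.of α).convs n = x

/-- `x` is a nearest mediant of `α`: a mediant `(b·pₙ + pₙ₋₁)/(b·qₙ + qₙ₋₁)` with
`b` an integer, `1 ≤ b ≤ a_{n+1} - 1`, and moreover `b = 1` or `b = a_{n+1} - 1`.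
Here `pₖ/qₖ` are the convergents of `α` and `a_{n+1}` is the `(n+1)`-st partial
quotient of `α` (which must exist). -/
def Real.IsNearestMediantOf (α x : ℝ) : Prop :=
  ∃ (n : ℕ) (b : ℤ) (a : ℝ),
    (GenContFract.of α).partDens.get? n = some a ∧
    1 ≤ b ∧ (b : ℝ) ≤ a - 1 ∧ ((b : ℝ) = 1 ∨ (b : ℝ) = a - 1) ∧
    x = ((b : ℝ) * ((GenContFract.of α).contsAux (n + 1)).a
          + ((GenContFract.of α).contsAux n).a) /
        ((b : ℝ) * ((GenContFract.of α).contsAux (n + 1)).b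
          + ((GenContFract.of α).contsAux n).b)

/-- `x` is a first mediant of `α`: a mediant `(b·pₙ + pₙ₋₁)/(b·qₙ + qₙ₋₁)` with `b = 1`,
where `1 ≤ a_{n+1} - 1`. -/
def Real.IsFirstMediantOf (α x : ℝ) : Prop :=
  ∃ (n : ℕ) (a : ℝ),
    (GenContFract.of α).partDens.get? n = some a ∧
    (1 : ℝ) ≤ a - 1 ∧
    x = (((GenContFract.of α).contsAux (n + 1)).a + ((GenContFract.of α).contsAux n).a) /
        (((GenContFract.of α).contsAux (n + 1)).b + ((GenContFract.of α).contsAux n).b)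

/-- The value of the finite simple continued fraction `[a; l₀, l₁, …]`. -/
noncomputable def cfVal : ℤ → List ℤ → ℝ
  | a, [] => (a : ℝ)
  | a, x :: xs => (a : ℝ) + 1 / cfVal x xs



section KoksmaAux

theorem kx_not_term (α : ℝ) (hα : Irrational α) (n : ℕ) :
    ¬(GenContFract.of α).TerminatedAt n := by
  intro h
  obtain ⟨q, hq⟩ := (GenContFract.terminates_iff_rat α).mp ⟨n, h⟩
  exact hα ⟨q, hq.symm⟩

theorem kx_stream (α : ℝ) (h : ∀ k, ¬(GenContFract.of α).TerminatedAt k) (n : ℕ) :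
    ∃ ifp, GenContFract.IntFractPair.stream α n = some ifp ∧ 0 < ifp.fr ∧ ifp.fr < 1 := by
  have h2 : GenContFract.IntFractPair.stream α (n+1) ≠ none := by
    intro hn
    exact h n (of_terminatedAt_n_iff_succ_nth_intFractPair_stream_eq_none.mpr hn)
  have h1 : GenContFract.IntFractPair.stream α n ≠ none := by
    intro hn
    exact h2 (GenContFract.IntFractPair.stream_isSeq α hn)
  obtain ⟨ifp, hifp⟩ := Option.ne_none_iff_exists'.mp h1
  have hfrne : ifp.fr ≠ 0 := by
    intro h0
    exact h2 (GenContFract.IntFractPair.stream_eq_none_of_fr_eq_zero hifp h0)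
  have h0 := GenContFract.IntFractPair.nth_stream_fr_nonneg hifp
  have hlt := GenContFract.IntFractPair.nth_stream_fr_lt_one hifp
  exact ⟨ifp, hifp, lt_of_le_of_ne h0 (Ne.symm hfrne), hlt⟩

theorem kx_exists_int_contsAux (α : ℝ) (h : ∀ k, ¬(GenContFract.of α).TerminatedAt k) :
    ∀ n : ℕ, ∃ P Q : ℤ, ((GenContFract.of α).contsAux n).a = (P : ℝ) ∧
      ((GenContFract.of α).contsAux n).b = (Q : ℝ) := by
  have key : ∀ n : ℕ, (∃ P Q : ℤ, ((GenContFract.of α).contsAux n).a = (P : ℝ) ∧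
      ((GenContFract.of α).contsAux n).b = (Q : ℝ)) ∧
      (∃ P Q : ℤ, ((GenContFract.of α).contsAux (n+1)).a = (P : ℝ) ∧
      ((GenContFract.of α).contsAux (n+1)).b = (Q : ℝ)) := by
    intro n
    induction n with
    | zero =>
      constructor
      · exact ⟨1, 0, by simp [zeroth_contAux_eq_one_zero], by simp [zeroth_contAux_eq_one_zero]⟩
      · refine ⟨⌊α⌋, 1, ?_, ?_⟩
        · rw [first_contAux_eq_h_one, of_h_eq_floor]
        · rw [first_contAux_eq_h_one]; simp
    | succ k ih =>
      refine ⟨ih.2, ?_⟩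
      have hne : (GenContFract.of α).s.get? k ≠ none := by
        exact fun hn => h k (terminatedAt_iff_s_none.mpr hn)
      obtain ⟨gp, hgp⟩ := Option.ne_none_iff_exists'.mp hne
      have hga : gp.a = 1 := of_partNum_eq_one (partNum_eq_s_a hgp)
      obtain ⟨z, hz⟩ := exists_int_eq_of_partDen (partDen_eq_s_b hgp)
      obtain ⟨⟨P', Q', hP', hQ'⟩, ⟨P, Q, hP, hQ⟩⟩ := ih
      have hrec := contsAux_recurrence hgp rfl rfl
      refine ⟨z * P + P', z * Q + Q', ?_, ?_⟩ <;>
        rw [hrec] <;> simp [hga, hz, hP, hQ, hP', hQ'] <;> push_cast <;> ring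
  exact fun n => (key n).1

/-- The key error-term identity, in multiplied-out form. -/
theorem kx_delta (α : ℝ) (n : ℕ) {ifp : IntFractPair ℝ}
    (hifp : GenContFract.IntFractPair.stream α n = some ifp) (hfr : 0 < ifp.fr)
    (hB : 0 < ((GenContFract.of α).contsAux (n+1)).b)
    (hB' : 0 ≤ ((GenContFract.of α).contsAux n).b) :
    (((GenContFract.of α).contsAux (n+1)).b * α - ((GenContFract.of α).contsAux (n+1)).a)
      * (ifp.fr⁻¹ * ((GenContFract.of α).contsAux (n+1)).b
          + ((GenContFract.of α).contsAux n).b) = (-1)^n := by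
  have tmp := sub_convs_eq hifp
  simp only [hfr.ne', if_false] at tmp
  have hc : (GenContFract.of α).convs n
      = ((GenContFract.of α).contsAux (n+1)).a / ((GenContFract.of α).contsAux (n+1)).b := by
    rw [conv_eq_conts_a_div_conts_b, nth_cont_eq_succ_nth_contAux]
  rw [hc] at tmp
  have hfri : 0 < ifp.fr⁻¹ := inv_pos.mpr hfr
  have hd : 0 < ifp.fr⁻¹ * ((GenContFract.of α).contsAux (n+1)).b
      + ((GenContFract.of α).contsAux n).b := by positivity
  have key : ((GenContFract.of α).contsAux (n+1)).b * α - ((GenContFract.of α).contsAux (n+1)).a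
      = (-1)^n / (ifp.fr⁻¹ * ((GenContFract.of α).contsAux (n+1)).b
          + ((GenContFract.of α).contsAux n).b) := by
    calc ((GenContFract.of α).contsAux (n+1)).b * α - ((GenContFract.of α).contsAux (n+1)).a
        = ((GenContFract.of α).contsAux (n+1)).b
          * (α - ((GenContFract.of α).contsAux (n+1)).a / ((GenContFract.of α).contsAux (n+1)).b) := by
          field_simp
      _ = ((GenContFract.of α).contsAux (n+1)).b * ((-1)^n / (((GenContFract.of α).contsAux (n+1)).b
            * (ifp.fr⁻¹ * ((GenContFract.of α).contsAux (n+1)).b + ((GenContFract.of α).contsAux n).b))) := by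
          rw [tmp]
      _ = (-1)^n / (ifp.fr⁻¹ * ((GenContFract.of α).contsAux (n+1)).b
            + ((GenContFract.of α).contsAux n).b) := by
          rw [eq_div_iff hd.ne']
          field_simp
  rw [key, div_mul_cancel₀ _ hd.ne']

end KoksmaAux

set_option maxHeartbeats 4000000 in
/-- **Koksma's theorem.** If `α` is irrational, `p, q` are coprime with `q > 0` and
`q·|qα - p| < 2/3`, then `p/q` is a convergent or a first mediant of `α`. -/
theorem koksma_convergent_or_firstMediant (α : ℝ) (hα : Irrational α) (p q : ℤ)
    (hq : 0 < q) (hcop : Int.gcd p q = 1)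
    (h : (q : ℝ) * |(q : ℝ) * α - (p : ℝ)| < 2 / 3) :
    Real.IsConvergentOf α ((p : ℝ) / q) ∨ Real.IsFirstMediantOf α ((p : ℝ) / q) := by
  have hterm : ∀ k, ¬(GenContFract.of α).TerminatedAt k := kx_not_term α hα
  have hint := kx_exists_int_contsAux α hterm
  -- find the index n with Qₙ ≤ q < Qₙ₊₁
  have hex : ∃ k : ℕ, (q : ℝ) < (GenContFract.of α).dens k := by
    refine ⟨q.toNat + 4, ?_⟩
    have hfib := Nat.le_fib_self (show 5 ≤ q.toNat + 4 + 1 by omega)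
    have hden := succ_nth_fib_le_of_nth_den (v := α) (n := q.toNat + 4)
      (Or.inr (hterm _))
    have h1 : (q : ℝ) < ((q.toNat + 4 + 1 : ℕ) : ℝ) := by
      have h2 : (q : ℝ) ≤ (q.toNat : ℝ) := by exact_mod_cast Int.self_le_toNat q
      push_cast
      linarith
    have h3 : ((q.toNat + 4 + 1 : ℕ) : ℝ) ≤ ((Nat.fib (q.toNat + 4 + 1) : ℕ) : ℝ) := by
      exact_mod_cast hfib
    linarith
  classical
  have hN0 : Nat.find hex ≠ 0 := by
    intro h0
    have hsp := Nat.find_spec hex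
    rw [h0, zeroth_den_eq_one] at hsp
    have : (1 : ℝ) ≤ (q : ℝ) := by exact_mod_cast hq
    linarith
  obtain ⟨n, hn⟩ : ∃ n, Nat.find hex = n + 1 := ⟨Nat.find hex - 1, by omega⟩
  have hdens : ∀ k, (GenContFract.of α).dens k = ((GenContFract.of α).contsAux (k+1)).b := by
    intro k; rw [den_eq_conts_b, nth_cont_eq_succ_nth_contAux]
  have hq2R : (q : ℝ) < ((GenContFract.of α).contsAux (n+2)).b := by
    have := Nat.find_spec hex
    rw [hn, hdens] at this
    exact this
  have hq1R : ((GenContFract.of α).contsAux (n+1)).b ≤ (q : ℝ) := by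
    have := Nat.find_min hex (show n < Nat.find hex by omega)
    rw [hdens] at this
    exact not_lt.mp this
  -- stream data
  obtain ⟨ifp0, hifp0, hfr0, hfr0'⟩ := kx_stream α hterm n
  obtain ⟨ifp1, hifp1, hfr1, hfr1'⟩ := kx_stream α hterm (n+1)
  -- relation between consecutive stream values
  have hfloor : (ifp1.b : ℝ) + ifp1.fr = ifp0.fr⁻¹ := by
    obtain ⟨ifp0', hifp0', hfrne', hof⟩ :=
      GenContFract.IntFractPair.succ_nth_stream_eq_some_iff.mp hifp1
    have heq : ifp0' = ifp0 := by
      have := hifp0'.symm.trans hifp0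
      exact Option.some.inj this
    subst heq
    rw [← hof]
    simp only [GenContFract.IntFractPair.of]
    exact Int.floor_add_fract _
  have hsn : (GenContFract.of α).s.get? n = some ⟨1, (ifp1.b : ℝ)⟩ :=
    get?_of_eq_some_of_succ_get?_intFractPair_stream hifp1
  have hpd : (GenContFract.of α).partDens.get? n = some ((ifp1.b : ℝ)) := partDen_eq_s_b hsn
  have hb1R : (1 : ℝ) ≤ (ifp1.b : ℝ) := of_one_le_get?_partDen hpd
  -- integer continuants
  obtain ⟨P', Q', hP', hQ'⟩ := hint n
  obtain ⟨P, Q, hP, hQ⟩ := hint (n+1)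
  have hrec := contsAux_recurrence hsn rfl rfl
  have hP2 : ((GenContFract.of α).contsAux (n+2)).a = ((ifp1.b * P + P' : ℤ) : ℝ) := by
    rw [hrec]; push_cast; simp only [hP, hP']; ring
  have hQ2 : ((GenContFract.of α).contsAux (n+2)).b = ((ifp1.b * Q + Q' : ℤ) : ℝ) := by
    rw [hrec]; push_cast; simp only [hQ, hQ']; ring
  -- positivity facts
  have hfibB : (Nat.fib (n+1) : ℝ) ≤ ((GenContFract.of α).contsAux (n+1)).b :=
    fib_le_of_contsAux_b (Or.inr (hterm _))
  have hB1 : (1 : ℝ) ≤ ((GenContFract.of α).contsAux (n+1)).b := by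
    have : (1 : ℕ) ≤ Nat.fib (n+1) := Nat.fib_pos.mpr n.succ_pos
    calc (1:ℝ) ≤ (Nat.fib (n+1) : ℝ) := by exact_mod_cast this
      _ ≤ _ := hfibB
  have hB'0 : (0:ℝ) ≤ ((GenContFract.of α).contsAux n).b := zero_le_of_contsAux_b
  have hB'B : ((GenContFract.of α).contsAux n).b ≤ ((GenContFract.of α).contsAux (n+1)).b := by
    cases n with
    | zero => rw [zeroth_contAux_eq_one_zero]; simpa using le_trans zero_le_one hB1
    | succ m =>
      have := of_den_mono (v := α) (n := m)
      rwa [hdens m, hdens (m+1)] at this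
  -- integer versions
  have hQ1 : (1:ℤ) ≤ Q := by rw [hQ] at hB1; exact_mod_cast hB1
  have hQ'0 : (0:ℤ) ≤ Q' := by rw [hQ'] at hB'0; exact_mod_cast hB'0
  have hQ'Q : Q' ≤ Q := by rw [hQ', hQ] at hB'B; exact_mod_cast hB'B
  have hb1 : (1:ℤ) ≤ ifp1.b := by exact_mod_cast hb1R
  have hqQ : Q ≤ q := by rw [hQ] at hq1R; exact_mod_cast hq1R
  have hqQ2 : q < ifp1.b * Q + Q' := by rw [hQ2] at hq2R; exact_mod_cast hq2R
  -- β
  have hββ : ifp1.fr * ifp1.fr⁻¹ = 1 := mul_inv_cancel₀ hfr1.ne'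
  have hβ : 1 < ifp1.fr⁻¹ := by nlinarith [hββ]
  have hβ0 : 0 < ifp1.fr⁻¹ := lt_trans one_pos hβ
  -- B2 positivity
  have hq1' : (1:ℝ) ≤ (q:ℝ) := by exact_mod_cast hq
  have hB2pos : 0 < ((GenContFract.of α).contsAux (n+2)).b := lt_of_lt_of_le
    (lt_of_lt_of_le one_pos (le_of_lt (lt_of_le_of_lt hq1' hq2R))) le_rfl
  have hBpos : 0 < ((GenContFract.of α).contsAux (n+1)).b := lt_of_lt_of_le one_pos hB1
  -- delta identities
  have e0 := kx_delta α n hifp0 hfr0 hBpos hB'0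
  have e1 := kx_delta α (n+1) hifp1 hfr1 hB2pos hBpos.le
  -- determinant
  have det : ((GenContFract.of α).contsAux (n+1)).a * ((GenContFract.of α).contsAux (n+2)).b
      - ((GenContFract.of α).contsAux (n+1)).b * ((GenContFract.of α).contsAux (n+2)).a
      = (-1)^(n+1) := (SimpContFract.of α).determinant (hterm n)
  -- rewrite everything through integer casts
  rw [hP, hQ, hP2, hQ2] at det
  rw [hP, hQ, hQ'] at e0
  rw [hP2, hQ2, hQ] at e1
  have idet : P * (ifp1.b * Q + Q') - Q * (ifp1.b * P + P') = (-1)^(n+1) := by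
    exact_mod_cast det
  push_cast at e0 e1
  -- convert the error denominator at level n to the one at level n+1
  have hd0D : ifp1.fr⁻¹ * (ifp0.fr⁻¹ * (Q:ℝ) + (Q':ℝ))
      = ifp1.fr⁻¹ * ((ifp1.b:ℝ) * (Q:ℝ) + (Q':ℝ)) + (Q:ℝ) := by
    rw [← hfloor]
    linear_combination (Q:ℝ) * hββ
  have e0' : ((Q:ℝ) * α - (P:ℝ)) * (ifp1.fr⁻¹ * ((ifp1.b:ℝ) * (Q:ℝ) + (Q':ℝ)) + (Q:ℝ))
      = (-1)^n * ifp1.fr⁻¹ := by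
    linear_combination ifp1.fr⁻¹ * e0 - ((Q:ℝ) * α - (P:ℝ)) * hd0D
  -- the coordinates of (p, q) in the basis of consecutive convergents
  obtain ⟨u, hu⟩ : ∃ u : ℤ, u = (-1)^(n+1) * (q * P - p * Q) := ⟨_, rfl⟩
  obtain ⟨w, hw⟩ : ∃ w : ℤ, w = (-1)^(n+1) * (p * (ifp1.b * Q + Q') - q * (ifp1.b * P + P')) :=
    ⟨_, rfl⟩
  have hee : ((-1:ℤ))^(n+1) * (-1)^(n+1) = 1 := by
    rw [← mul_pow]; norm_num
  have hqid : u * (ifp1.b * Q + Q') + w * Q = q := by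
    linear_combination (ifp1.b * Q + Q') * hu + Q * hw + ((-1:ℤ)^(n+1) * q) * idet + q * hee
  have hpid : u * (ifp1.b * P + P') + w * P = p := by
    linear_combination (ifp1.b * P + P') * hu + P * hw + ((-1:ℤ)^(n+1) * p) * idet + p * hee
  have hqidR : (u:ℝ) * ((ifp1.b:ℝ) * (Q:ℝ) + (Q':ℝ)) + (w:ℝ) * (Q:ℝ) = (q:ℝ) := by
    exact_mod_cast hqid
  have hpidR : (u:ℝ) * ((ifp1.b:ℝ) * (P:ℝ) + (P':ℝ)) + (w:ℝ) * (P:ℝ) = (p:ℝ) := by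
    exact_mod_cast hpid
  have hpow : ((-1:ℝ))^(n+1) = -((-1:ℝ))^n := by rw [pow_succ]; ring
  -- real cast facts
  have hQ1R : (1:ℝ) ≤ (Q:ℝ) := by exact_mod_cast hQ1
  have hQ'0R : (0:ℝ) ≤ (Q':ℝ) := by exact_mod_cast hQ'0
  have hQ'QR : (Q':ℝ) ≤ (Q:ℝ) := by exact_mod_cast hQ'Q
  have hqQR : (Q:ℝ) ≤ (q:ℝ) := by exact_mod_cast hqQ
  have hqQ2RR : (q:ℝ) < (ifp1.b:ℝ) * (Q:ℝ) + (Q':ℝ) := by exact_mod_cast hqQ2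
  have hB2Rpos : (0:ℝ) < (ifp1.b:ℝ) * (Q:ℝ) + (Q':ℝ) := lt_trans (lt_of_lt_of_le zero_lt_one hq1') hqQ2RR
  have hD : (0:ℝ) < ifp1.fr⁻¹ * ((ifp1.b:ℝ) * (Q:ℝ) + (Q':ℝ)) + (Q:ℝ) :=
    add_pos (mul_pos hβ0 hB2Rpos) (by linarith)
  -- the master identity
  have ekey : ((q:ℝ) * α - (p:ℝ)) * (ifp1.fr⁻¹ * ((ifp1.b:ℝ) * (Q:ℝ) + (Q':ℝ)) + (Q:ℝ))
      = (-1)^(n+1) * ((u:ℝ) - (w:ℝ) * ifp1.fr⁻¹) := by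
    linear_combination (u:ℝ) * e1 + (w:ℝ) * e0'
      - (α * (ifp1.fr⁻¹ * ((ifp1.b:ℝ) * (Q:ℝ) + (Q':ℝ)) + (Q:ℝ))) * hqidR
      + (ifp1.fr⁻¹ * ((ifp1.b:ℝ) * (Q:ℝ) + (Q':ℝ)) + (Q:ℝ)) * hpidR
      + ((w:ℝ) * ifp1.fr⁻¹) * hpow
  have hkey2 : (q:ℝ) * α - (p:ℝ)
      = (-1)^(n+1) * ((u:ℝ) - (w:ℝ) * ifp1.fr⁻¹)
        / (ifp1.fr⁻¹ * ((ifp1.b:ℝ) * (Q:ℝ) + (Q':ℝ)) + (Q:ℝ)) := by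
    rw [eq_div_iff hD.ne']; exact ekey
  have h3 : 3 * (q:ℝ) * |(u:ℝ) - (w:ℝ) * ifp1.fr⁻¹|
      < 2 * (ifp1.fr⁻¹ * ((ifp1.b:ℝ) * (Q:ℝ) + (Q':ℝ)) + (Q:ℝ)) := by
    have habs : |(q:ℝ) * α - (p:ℝ)| = |(u:ℝ) - (w:ℝ) * ifp1.fr⁻¹|
        / (ifp1.fr⁻¹ * ((ifp1.b:ℝ) * (Q:ℝ) + (Q':ℝ)) + (Q:ℝ)) := by
      rw [hkey2, abs_div, abs_mul, abs_pow, abs_neg, abs_one, one_pow, one_mul, abs_of_pos hD]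
    rw [habs, ← mul_div_assoc] at h
    have := (div_lt_iff₀ hD).mp h
    linarith
  have hQ2posZ : (0:ℤ) < ifp1.b * Q + Q' := by exact_mod_cast hB2Rpos
  clear hu hw idet det e0 e1 e0' hd0D ekey hkey2 h hrec hfibB hq2R hq1R hB1 hB'0 hB'B
  -- main case analysis
  rcases lt_trichotomy u 0 with hult | hu0 | hugt
  · -- u < 0 : impossible
    exfalso
    have hw1 : 1 ≤ w := by
      by_contra hcon
      push_neg at hcon
      have h1 : u * (ifp1.b * Q + Q') ≤ -(ifp1.b * Q + Q') := by
        nlinarith [hQ2posZ]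
      have h2 : w * Q ≤ 0 := mul_nonpos_of_nonpos_of_nonneg (by omega) (by omega)
      linarith [hqid, h1, h2, hQ2posZ, hq]
    have huR : (u:ℝ) ≤ -1 := by exact_mod_cast (show u ≤ -1 by omega)
    have hwR : (1:ℝ) ≤ (w:ℝ) := by exact_mod_cast hw1
    have habs : |(u:ℝ) - (w:ℝ) * ifp1.fr⁻¹| = (w:ℝ) * ifp1.fr⁻¹ - (u:ℝ) := by
      rw [abs_of_neg (by nlinarith)]; ring
    rw [habs] at h3
    have k0 : (u:ℝ) * ((ifp1.b:ℝ) * (Q:ℝ) + (Q':ℝ)) ≤ -((ifp1.b:ℝ) * (Q:ℝ) + (Q':ℝ)) := by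
      nlinarith [hB2Rpos]
    have k1 : (q:ℝ) + ((ifp1.b:ℝ) * (Q:ℝ) + (Q':ℝ)) ≤ (w:ℝ) * (Q:ℝ) := by linarith [hqidR]
    have k2 : (w:ℝ) * (Q:ℝ) ≤ (w:ℝ) * (q:ℝ) :=
      mul_le_mul_of_nonneg_left hqQR (by linarith)
    have k3 : (q:ℝ) + ((ifp1.b:ℝ) * (Q:ℝ) + (Q':ℝ)) ≤ (w:ℝ) * (q:ℝ) := le_trans k1 k2
    have k4 : ifp1.fr⁻¹ * ((q:ℝ) + ((ifp1.b:ℝ) * (Q:ℝ) + (Q':ℝ)))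
        ≤ ifp1.fr⁻¹ * ((w:ℝ) * (q:ℝ)) := mul_le_mul_of_nonneg_left k3 hβ0.le
    nlinarith [k4, mul_pos hβ0 hB2Rpos, mul_nonneg (show (0:ℝ) ≤ 3 * (q:ℝ) by linarith)
      (show (0:ℝ) ≤ -(u:ℝ) by linarith), mul_nonneg (show (0:ℝ) ≤ (q:ℝ) by linarith)
      (show (0:ℝ) ≤ ifp1.fr⁻¹ - 1 by linarith)]
  · -- u = 0 : p/q is the n-th convergent
    subst hu0
    left
    refine ⟨n, ?_⟩
    have hw0 : w ≠ 0 := by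
      intro h0
      subst h0
      simp at hqid
      omega
    have hpw : p = w * P := by linarith [hpid]
    have hqw : q = w * Q := by linarith [hqid]
    rw [conv_eq_conts_a_div_conts_b, nth_cont_eq_succ_nth_contAux, hP, hQ]
    have hpR : ((p:ℤ):ℝ) = (w:ℝ) * (P:ℝ) := by rw [hpw]; push_cast; ring
    have hqR2 : ((q:ℤ):ℝ) = (w:ℝ) * (Q:ℝ) := by rw [hqw]; push_cast; ring
    rw [hpR, hqR2, mul_div_mul_left _ _ (Int.cast_ne_zero.mpr hw0)]
  · -- u > 0
    rcases lt_trichotomy w 0 with hwlt | hw0 | hwgt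
    · -- the main case : u ≥ 1, w ≤ -1
      rcases eq_or_lt_of_le (show (1:ℤ) ≤ u by omega) with hu1 | hu2
      · -- u = 1
        rw [← hu1] at hqid hpid
        have hqid1 : (ifp1.b * Q + Q') + w * Q = q := by linarith [hqid]
        have hpid1 : (ifp1.b * P + P') + w * P = p := by linarith [hpid]
        have hwb : 0 ≤ ifp1.b + w := by
          by_contra hcon
          push_neg at hcon
          have h1 : (ifp1.b + 1) * Q ≤ (-w) * Q :=
            mul_le_mul_of_nonneg_right (by omega) (by omega)
          nlinarith [hqid1, hqQ, hQ'Q, hQ1]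
        rcases eq_or_lt_of_le hwb with hsb0 | hsb1
        · -- w = -ifp1.b : p/q is the (n-1)-st convergent
          have hQQ' : Q' = Q := by
            have h1 : (-w) * Q ≤ (ifp1.b - 1) * Q + Q' := by linarith [hqid1, hqQ]
            have h2 : (-w) * Q = ifp1.b * Q := by linear_combination (Q:ℤ) * hsb0
            linarith [h1, h2, hQ'Q]
          have hqQ' : q = Q' := by linear_combination -hqid1 - (Q:ℤ) * hsb0
          have hpP' : p = P' := by linear_combination -hpid1 - (P:ℤ) * hsb0
          cases n with
          | zero =>
            exfalso
            have : ((GenContFract.of α).contsAux 0).b = (0:ℝ) := by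
              rw [zeroth_contAux_eq_one_zero]
            rw [hQ'] at this
            have : Q' = 0 := by exact_mod_cast this
            omega
          | succ m =>
            left
            refine ⟨m, ?_⟩
            rw [conv_eq_conts_a_div_conts_b, nth_cont_eq_succ_nth_contAux, hP', hQ', hpP', hqQ']
        · -- w = 1 - ifp1.b (first mediant) or contradiction
          rcases eq_or_lt_of_le (show (1:ℤ) ≤ ifp1.b + w by omega) with hsb2 | hsb3
          · -- first mediant
            right
            refine ⟨n, (ifp1.b:ℝ), hpd, ?_, ?_⟩
            · have hb2 : (2:ℤ) ≤ ifp1.b := by omega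
              have : (2:ℝ) ≤ (ifp1.b:ℝ) := by exact_mod_cast hb2
              linarith
            · have hpPP : p = P + P' := by linear_combination -hpid1 - (P:ℤ) * hsb2
              have hqQQ : q = Q + Q' := by linear_combination -hqid1 - (Q:ℤ) * hsb2
              rw [hP, hP', hQ, hQ', hpPP, hqQQ]
              push_cast
              ring
          · -- 1 ≤ -w ≤ ifp1.b - 2 : contradiction
            exfalso
            have hqval : (q:ℝ) = ((ifp1.b:ℝ) + (w:ℝ)) * (Q:ℝ) + (Q':ℝ) := by
              have hz : q = (ifp1.b + w) * Q + Q' := by linear_combination -hqid1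
              rw [hz]; push_cast; ring
            have htR : (2:ℝ) ≤ (ifp1.b:ℝ) + (w:ℝ) := by
              exact_mod_cast (show (2:ℤ) ≤ ifp1.b + w by omega)
            have hsR : (1:ℝ) ≤ -(w:ℝ) := by
              exact_mod_cast (show (1:ℤ) ≤ -w by omega)
            have habs : |(1:ℝ) - (w:ℝ) * ifp1.fr⁻¹| = 1 - (w:ℝ) * ifp1.fr⁻¹ := by
              rw [abs_of_pos]
              nlinarith
            have huRR : ((1:ℤ):ℝ) = (1:ℝ) := by norm_num
            rw [← hu1] at h3
            push_cast at h3
            rw [habs] at h3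
            have n1 : (0:ℝ) ≤ (-(w:ℝ) - 1) * (3 * ((ifp1.b:ℝ) + (w:ℝ)) - 2) :=
              mul_nonneg (by linarith) (by linarith)
            have m1 : (0:ℝ) ≤ ifp1.fr⁻¹ * (Q:ℝ)
                * (3 * (-(w:ℝ)) * ((ifp1.b:ℝ) + (w:ℝ)) - 2 * (-(w:ℝ)) - 2 * ((ifp1.b:ℝ) + (w:ℝ))) :=
              mul_nonneg (mul_nonneg hβ0.le (by linarith)) (by nlinarith [n1])
            have m2 : (0:ℝ) ≤ ifp1.fr⁻¹ * (Q':ℝ) * (3 * (-(w:ℝ)) - 2) :=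
              mul_nonneg (mul_nonneg hβ0.le hQ'0R) (by linarith)
            have m3 : (0:ℝ) ≤ (3 * ((ifp1.b:ℝ) + (w:ℝ)) - 2) * (Q:ℝ) :=
              mul_nonneg (by linarith) (by linarith)
            nlinarith [m1, m2, m3, hQ'0R, hqval, h3]
      · -- u ≥ 2 : contradiction
        exfalso
        have hq3 : q ≤ ifp1.b * Q + Q' - 1 := by omega
        have hu2' : (2:ℤ) ≤ u := by omega
        have hsQZ : (ifp1.b * Q + Q') + 1 ≤ (-w) * Q := by
          have h1 : 2 * (ifp1.b * Q + Q') ≤ u * (ifp1.b * Q + Q') :=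
            mul_le_mul_of_nonneg_right hu2' (by omega)
          linarith [hqid, hq3]
        have hsQR : ((ifp1.b:ℝ) * (Q:ℝ) + (Q':ℝ)) + 1 ≤ (-(w:ℝ)) * (Q:ℝ) := by
          exact_mod_cast hsQZ
        have huR2 : (2:ℝ) ≤ (u:ℝ) := by exact_mod_cast hu2'
        have hwnegR : (w:ℝ) ≤ -1 := by exact_mod_cast (show w ≤ -1 by omega)
        have habs : |(u:ℝ) - (w:ℝ) * ifp1.fr⁻¹| = (u:ℝ) - (w:ℝ) * ifp1.fr⁻¹ := by
          rw [abs_of_pos]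
          nlinarith
        rw [habs] at h3
        have t1 : (Q:ℝ) * (-(w:ℝ)) ≤ (q:ℝ) * (-(w:ℝ)) :=
          mul_le_mul_of_nonneg_right hqQR (by linarith)
        have t3 : ((ifp1.b:ℝ) * (Q:ℝ) + (Q':ℝ)) + 1 ≤ (q:ℝ) * (-(w:ℝ)) := by nlinarith [hsQR, t1]
        have t4 : ifp1.fr⁻¹ * (((ifp1.b:ℝ) * (Q:ℝ) + (Q':ℝ)) + 1)
            ≤ ifp1.fr⁻¹ * ((q:ℝ) * (-(w:ℝ))) := mul_le_mul_of_nonneg_left t3 hβ0.le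
        have t5 : (Q:ℝ) * 2 ≤ (q:ℝ) * (u:ℝ) :=
          mul_le_mul hqQR huR2 (by norm_num) (by linarith)
        nlinarith [t4, t5, mul_pos hβ0 hB2Rpos, hβ0, hQ1R]
    · -- w = 0 : contradiction
      exfalso
      subst hw0
      simp at hqid
      have h1 : ifp1.b * Q + Q' ≤ u * (ifp1.b * Q + Q') :=
        le_mul_of_one_le_left (by omega) (by omega)
      omega
    · -- w > 0 : contradiction
      exfalso
      have h1 : ifp1.b * Q + Q' ≤ u * (ifp1.b * Q + Q') :=
        le_mul_of_one_le_left (by omega) (by omega)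
      have h2 : Q ≤ w * Q := le_mul_of_one_le_left (by omega) (by omega)
      linarith [hqid, hqQ2, hQ1]
end

section
/- Let p/q = [b₀; b₁, …, b_n] with b_n ≥ 2, gcd(p,q) = 1, q > 0, be the simple continued fraction expansion of the rational p/q, and let α be an irrational number. If (−1)ⁿ·sgn(α − p/q) = 1 and q·|qα − p| < 2/3, then p/q is a convergent of α. -/
open GenContFract

namespace BJ

noncomputable def ev : List ℤ → ℝ → ℝ
  | [], x => x
  | b :: l, x => b + (ev l x)⁻¹

@[simp] lemma ev_nil (x : ℝ) : ev [] x = x := rfl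
@[simp] lemma ev_cons (b : ℤ) (l : List ℤ) (x : ℝ) : ev (b :: l) x = b + (ev l x)⁻¹ := rfl

noncomputable def ew : List ℤ → ℝ
  | [] => 0
  | b :: l => b + (ew l)⁻¹

@[simp] lemma ew_nil : ew [] = 0 := rfl
@[simp] lemma ew_cons (b : ℤ) (l : List ℤ) : ew (b :: l) = b + (ew l)⁻¹ := rfl

lemma ev_pos : ∀ (l : List ℤ) (x : ℝ), 1 < x → (∀ b ∈ l, (1:ℤ) ≤ b) → 1 < ev l x := by
  intro l
  induction l with
  | nil => intro x hx _; exact hx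
  | cons b l ih =>
    intro x hx hl
    have h1 : 1 < ev l x := ih x hx (fun c hc => hl c (List.mem_cons_of_mem _ hc))
    have h2 : (0:ℝ) < (ev l x)⁻¹ := inv_pos.2 (by linarith)
    have hb : (1:ℝ) ≤ (b:ℝ) := by exact_mod_cast hl b (List.mem_cons_self)
    rw [ev_cons]; linarith

lemma ev_append : ∀ (l : List ℤ) (c : ℤ) (x : ℝ), ev (l ++ [c]) x = ev l (c + x⁻¹) := by
  intro l
  induction l with
  | nil => intro c x; simp
  | cons b l ih => intro c x; rw [List.cons_append, ev_cons, ih]; rfl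

lemma ew_append : ∀ (l : List ℤ) (c : ℤ), ew (l ++ [c]) = ev l (c:ℝ) := by
  intro l
  induction l with
  | nil => intro c; simp
  | cons b l ih => intro c; rw [List.cons_append, ew_cons, ih]; rfl

lemma ew_ge_one : ∀ (l : List ℤ), l ≠ [] → (∀ b ∈ l, (1:ℤ) ≤ b) → 1 ≤ ew l := by
  intro l
  induction l with
  | nil => intro h; exact absurd rfl h
  | cons b l ih =>
    intro _ hl
    have hb : (1:ℝ) ≤ (b:ℝ) := by exact_mod_cast hl b (List.mem_cons_self)
    have h2 : (0:ℝ) ≤ (ew l)⁻¹ := by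
      rcases eq_or_ne l [] with rfl | hne
      · simp
      · have := ih hne (fun c hc => hl c (List.mem_cons_of_mem _ hc))
        positivity
    rw [ew_cons]; linarith

/-- `(A, A', B, B')` such that `ev l x = (A x + A')/(B x + B')`. -/
def cfA : List ℤ → ℤ × ℤ × ℤ × ℤ
  | [] => (1, 0, 0, 1)
  | b :: l =>
    (b * (cfA l).1 + (cfA l).2.2.1, b * (cfA l).2.1 + (cfA l).2.2.2, (cfA l).1, (cfA l).2.1)

@[simp] lemma cfA_nil : cfA [] = (1, 0, 0, 1) := rfl
@[simp] lemma cfA_cons (b : ℤ) (l : List ℤ) :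
    cfA (b :: l) =
      (b * (cfA l).1 + (cfA l).2.2.1, b * (cfA l).2.1 + (cfA l).2.2.2, (cfA l).1, (cfA l).2.1) :=
  rfl

lemma cfA_pos : ∀ (l : List ℤ), (∀ b ∈ l, (1:ℤ) ≤ b) →
    1 ≤ (cfA l).1 ∧ 0 ≤ (cfA l).2.1 ∧ 0 ≤ (cfA l).2.2.1 ∧ 0 ≤ (cfA l).2.2.2 := by
  intro l
  induction l with
  | nil => intro _; simp
  | cons b l ih =>
    intro hl
    obtain ⟨h1, h2, h3, h4⟩ := ih (fun c hc => hl c (List.mem_cons_of_mem _ hc))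
    have hb : (1:ℤ) ≤ b := hl b (List.mem_cons_self)
    refine ⟨?_, ?_, ?_, ?_⟩ <;> simp only [cfA_cons] <;> nlinarith

lemma cfA_det : ∀ (l : List ℤ),
    (cfA l).1 * (cfA l).2.2.2 - (cfA l).2.1 * (cfA l).2.2.1 = (-1) ^ l.length := by
  intro l
  induction l with
  | nil => simp
  | cons b l ih => simp only [cfA_cons, List.length_cons, pow_succ]; ring_nf; linarith [ih]

lemma ev_cfA : ∀ (l : List ℤ) (x : ℝ), 0 < x → (∀ b ∈ l.tail, (1:ℤ) ≤ b) →
    0 < ((cfA l).2.2.1 : ℝ) * x + ((cfA l).2.2.2 : ℝ) ∧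
      ev l x = (((cfA l).1 : ℝ) * x + ((cfA l).2.1 : ℝ)) /
        (((cfA l).2.2.1 : ℝ) * x + ((cfA l).2.2.2 : ℝ)) := by
  intro l
  induction l with
  | nil => intro x hx _; simp
  | cons b l ih =>
    intro x hx hl
    have hl' : ∀ c ∈ l, (1:ℤ) ≤ c := hl
    obtain ⟨hA1, hA2, _, _⟩ := cfA_pos l hl'
    have hdenpos : (0:ℝ) < ((cfA l).1 : ℝ) * x + ((cfA l).2.1 : ℝ) := by
      have h1 : (1:ℝ) ≤ ((cfA l).1 : ℝ) := by exact_mod_cast hA1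
      have h2 : (0:ℝ) ≤ ((cfA l).2.1 : ℝ) := by exact_mod_cast hA2
      nlinarith
    obtain ⟨hd, hev⟩ := ih x hx (fun c hc => hl' c (List.mem_of_mem_tail hc))
    constructor
    · simpa only [cfA_cons] using hdenpos
    · rw [ev_cons, hev, inv_div]
      simp only [cfA_cons]
      push_cast
      field_simp
      ring

/-- If `α = ev l x` with `1 < x` and all partial quotients after the first at least `1`,
then the `IntFractPair.stream` of `α` passes exactly through the entries of `l`. -/
lemma stream_ev : ∀ (l : List ℤ) (x α : ℝ), 1 < x → (∀ b ∈ l.tail, (1:ℤ) ≤ b) →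
    α = ev l x → ∀ k, k < l.length →
    ∃ jp : IntFractPair ℝ, IntFractPair.stream α k = some jp ∧ l[k]? = some jp.b := by
  intro l
  induction l with
  | nil => intro x α _ _ _ k hk; simp at hk
  | cons b l ih =>
    intro x α hx hl hα k hk
    have htail : 1 < ev l x := ev_pos l x hx hl
    have hinv : (0:ℝ) < (ev l x)⁻¹ := inv_pos.2 (by linarith)
    have hinv1 : (ev l x)⁻¹ < 1 := by
      rw [inv_lt_one_iff₀]; right; exact htail
    have hfloor : ⌊α⌋ = b := by
      rw [hα, ev_cons, Int.floor_eq_iff]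
      constructor
      · linarith
      · linarith
    have hfract : Int.fract α = (ev l x)⁻¹ := by
      rw [Int.fract, hfloor, hα, ev_cons]; ring
    rcases k with _ | k
    · exact ⟨IntFractPair.of α, IntFractPair.stream_zero α, by
        simp [IntFractPair.of, hfloor]⟩
    · have hfne : Int.fract α ≠ 0 := by rw [hfract]; exact ne_of_gt hinv
      have hstep : IntFractPair.stream α (k+1) = IntFractPair.stream (Int.fract α)⁻¹ k :=
        IntFractPair.stream_succ hfne k
      have hval : (Int.fract α)⁻¹ = ev l x := by rw [hfract, inv_inv]
      have hk' : k < l.length := by simpa using hk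
      obtain ⟨jp, hjp, hb⟩ := ih x ((Int.fract α)⁻¹) hx
        (fun c hc => hl c (List.mem_of_mem_tail hc)) hval k hk'
      exact ⟨jp, by rw [hstep]; exact hjp, by simpa using hb⟩

/-- The partial quotients of a number `> 1` whose stream terminates at step `n` with `fr = 0`. -/
lemma stream_list : ∀ (n : ℕ) (v : ℝ) (ip : IntFractPair ℝ), 1 < v →
    IntFractPair.stream v n = some ip → ip.fr = 0 →
    ∃ l : List ℤ, l.length = n ∧ (∀ b ∈ l, (1:ℤ) ≤ b) ∧ 1 ≤ ip.b ∧ v = ev l (ip.b : ℝ) := by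
  intro n
  induction n with
  | zero =>
    intro v ip hv hip hfr
    rw [IntFractPair.stream_zero] at hip
    obtain rfl : IntFractPair.of v = ip := by injection hip
    have hfr' : Int.fract v = 0 := hfr
    have hvf : v = (⌊v⌋ : ℝ) := by
      have := Int.fract_add_floor v
      rw [hfr'] at this; linarith
    refine ⟨[], rfl, by simp, ?_, by simpa [IntFractPair.of] using hvf⟩
    show (1:ℤ) ≤ ⌊v⌋
    rw [Int.le_floor]; exact_mod_cast le_of_lt hv
  | succ n ih =>
    intro v ip hv hip hfr
    have hfne : Int.fract v ≠ 0 := by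
      intro h0
      have hvf : v = ((⌊v⌋ : ℤ) : ℝ) := by
        have := Int.fract_add_floor v
        rw [h0] at this; linarith
      rw [hvf, IntFractPair.stream_succ_of_int] at hip
      cases hip
    have hf0 : 0 < Int.fract v := lt_of_le_of_ne (Int.fract_nonneg v) (Ne.symm hfne)
    have hf1 : Int.fract v < 1 := Int.fract_lt_one v
    have hw : 1 < (Int.fract v)⁻¹ := one_lt_inv_iff₀.2 ⟨hf0, hf1⟩
    rw [IntFractPair.stream_succ hfne] at hip
    obtain ⟨l, hlen, hpos, hb, hev⟩ := ih _ ip hw hip hfr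
    have hfloor1 : (1:ℤ) ≤ ⌊v⌋ := by rw [Int.le_floor]; exact_mod_cast le_of_lt hv
    refine ⟨⌊v⌋ :: l, by simp [hlen], ?_, hb, ?_⟩
    · intro c hc
      rcases List.mem_cons.1 hc with rfl | hc'
      · exact hfloor1
      · exact hpos c hc'
    · rw [ev_cons, ← hev, inv_inv]
      have := Int.fract_add_floor v
      linarith

lemma convs'Aux_eq : ∀ (m : List ℤ) (s : Stream'.Seq (Pair ℝ)),
    (∀ b ∈ m, (1:ℤ) ≤ b) →
    (∀ k, k < m.length → ∃ b : ℤ, m[k]? = some b ∧ s.get? k = some ⟨1, (b:ℝ)⟩) →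
    convs'Aux s m.length = (ew m)⁻¹ := by
  intro m
  induction m with
  | nil => intro s _ _; simp [convs'Aux]
  | cons b m ih =>
    intro s hpos hs
    obtain ⟨b0, hb0, hhead⟩ := hs 0 (by simp)
    have hbb : b = b0 := by simpa using hb0
    subst hbb
    have hheads : s.head = some ⟨1, (b:ℝ)⟩ := hhead
    have htail : ∀ k, k < m.length → ∃ c : ℤ, m[k]? = some c ∧ s.tail.get? k = some ⟨1, (c:ℝ)⟩ := by
      intro k hk
      obtain ⟨c, hc, hsc⟩ := hs (k+1) (by simpa using Nat.succ_lt_succ hk)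
      exact ⟨c, by simpa using hc, by rwa [Stream'.Seq.get?_tail]⟩
    have IH := ih s.tail (fun c hc => hpos c (List.mem_cons_of_mem _ hc)) htail
    show convs'Aux s (m.length + 1) = _
    rw [convs'Aux, hheads]
    simp only [IH, ew_cons]
    rw [one_div]

end BJ

open BJ

/-- **Theorem of Barbolosi and Jager.** Let `p/q = [b₀; b₁, …, b_n]` (with `b_n ≥ 2` when
`n ≥ 1`) be the simple continued fraction expansion of the rational `p/q`, `gcd(p,q) = 1`,
`q > 0`, and let `α` be irrational. If `(-1)ⁿ·sgn(α - p/q) = 1` and `q·|qα - p| < 2/3`,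
then `p/q` is a convergent of `α`.  The fact that the expansion of `p/q` has exactly the
indices `0, …, n` is expressed by saying that the `n`-th term of the continued fraction
algorithm stream of `p/q` exists and has vanishing fractional part. -/
theorem barbolosi_jager (α : ℝ) (hα : Irrational α) (p q : ℤ) (hq : 0 < q)
    (hcop : Int.gcd p q = 1) (n : ℕ) (ip : IntFractPair ℝ)
    (hip : IntFractPair.stream ((p : ℝ) / q) n = some ip)
    (hfr : ip.fr = 0) (hlast : 1 ≤ n → 2 ≤ ip.b)
    (hsign : (-1 : ℝ) ^ n * Real.sign (α - (p : ℝ) / q) = 1)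
    (h : (q : ℝ) * |(q : ℝ) * α - (p : ℝ)| < 2 / 3) :
    Real.IsConvergentOf α ((p : ℝ) / q) := by
  have hq0 : (0:ℝ) < (q:ℝ) := by exact_mod_cast hq
  set v : ℝ := (p:ℝ)/q with hv
  have hαv : α ≠ v := by
    intro hEq
    exact hα ⟨(p:ℚ)/(q:ℚ), by rw [hEq, hv]; push_cast; ring⟩
  have hsign' : 0 < (-1:ℝ)^n * (α - v) := by
    rcases lt_trichotomy (α - v) 0 with hlt | heq | hgt
    · rw [Real.sign_of_neg hlt] at hsign
      have hneg : (-1:ℝ)^n = -1 := by linarith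
      rw [hneg]; linarith
    · exact absurd (by linarith : α = v) hαv
    · rw [Real.sign_of_pos hgt] at hsign
      have hone : (-1:ℝ)^n = 1 := by linarith
      rw [hone]; linarith
  rcases n with _ | n₀
  · -- n = 0 : p/q is an integer
    rw [IntFractPair.stream_zero] at hip
    obtain rfl : IntFractPair.of v = ip := by injection hip
    have hfr0 : Int.fract v = 0 := hfr
    have hvfl : v = (⌊v⌋ : ℝ) := by
      have := Int.fract_add_floor v
      rw [hfr0] at this; linarith
    have hpZ : p = ⌊v⌋ * q := by
      have h2 : (p:ℝ)/(q:ℝ) = (⌊v⌋:ℝ) := by rw [← hv]; exact hvfl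
      rw [div_eq_iff hq0.ne'] at h2
      exact_mod_cast h2
    have hq1 : q = 1 := by
      have hdvd : q ∣ (Int.gcd p q : ℤ) := Int.dvd_coe_gcd ⟨⌊v⌋, by rw [hpZ]; ring⟩ dvd_rfl
      rw [hcop] at hdvd
      rcases Int.isUnit_iff.1 (isUnit_of_dvd_one hdvd) with h1 | h1
      · exact h1
      · omega
    subst hq1
    have hvp : v = (p:ℝ) := by rw [hv]; simp
    have hαp : 0 < α - p := by
      have := hsign'
      simpa [hvp] using this
    have habs : |α - (p:ℝ)| < 2/3 := by
      have := h
      simpa using this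
    have hfl : ⌊α⌋ = p := by
      rw [Int.floor_eq_iff]
      constructor
      · linarith
      · have : α - p < 2/3 := lt_of_le_of_lt (le_abs_self _) habs
        linarith
    exact ⟨0, by rw [GenContFract.zeroth_conv_eq_h, GenContFract.of_h_eq_floor, hfl, hvp]⟩
  · -- n = n₀ + 1
    have hfne : Int.fract v ≠ 0 := by
      intro h0
      have hvf : v = ((⌊v⌋ : ℤ) : ℝ) := by
        have := Int.fract_add_floor v
        rw [h0] at this; linarith
      rw [hvf, IntFractPair.stream_succ_of_int] at hip
      cases hip
    have hf0 : 0 < Int.fract v := lt_of_le_of_ne (Int.fract_nonneg v) (Ne.symm hfne)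
    have hf1 : Int.fract v < 1 := Int.fract_lt_one v
    have hw : 1 < (Int.fract v)⁻¹ := one_lt_inv_iff₀.2 ⟨hf0, hf1⟩
    rw [IntFractPair.stream_succ hfne] at hip
    obtain ⟨lt, hlen, hpos, hb1, hevw⟩ := stream_list n₀ _ ip hw hip hfr
    have hbn2 : (2:ℤ) ≤ ip.b := hlast (by omega)
    set bn : ℤ := ip.b with hbn
    set L : List ℤ := ⌊v⌋ :: lt with hL
    have hLtail : ∀ b ∈ L.tail, (1:ℤ) ≤ b := by simpa [hL] using hpos
    have hLlen : L.length = n₀ + 1 := by simp [hL, hlen]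
    have hvL : v = ev L (bn:ℝ) := by
      rw [hL, ev_cons, ← hevw, inv_inv]
      have := Int.fract_add_floor v
      linarith
    obtain ⟨A, A', B, B', hcf⟩ : ∃ a a' b b', cfA L = (a, a', b, b') := ⟨_, _, _, _, rfl⟩
    -- positivity of B, B'
    have hconsB : B = (cfA lt).1 ∧ B' = (cfA lt).2.1 := by
      have hx := cfA_cons ⌊v⌋ lt
      rw [← hL, hcf] at hx
      exact ⟨congrArg (fun t => t.2.2.1) hx, congrArg (fun t => t.2.2.2) hx⟩
    obtain ⟨hposA, hposA', _, _⟩ := cfA_pos lt hpos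
    have hB1 : (1:ℤ) ≤ B := by rw [hconsB.1]; exact hposA
    have hB'0 : (0:ℤ) ≤ B' := by rw [hconsB.2]; exact hposA'
    have hbnR : (0:ℝ) < (bn:ℝ) := by
      have : (0:ℤ) < bn := by omega
      exact_mod_cast this
    obtain ⟨hden, hevbn⟩ := ev_cfA L (bn:ℝ) hbnR hLtail
    simp only [hcf] at hden hevbn
    have hdet := cfA_det L
    simp only [hcf, hLlen] at hdet
    -- identify p, q with the continuants
    have hQposR : (0:ℝ) < ((B*bn + B' : ℤ):ℝ) := by push_cast; exact hden
    have hQpos : (0:ℤ) < B*bn + B' := by exact_mod_cast hQposR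
    have hcross : p * (B*bn + B') = (A*bn + A') * q := by
      have h1 : (p:ℝ)/(q:ℝ) = ((A*bn + A' : ℤ):ℝ)/((B*bn + B' : ℤ):ℝ) := by
        rw [← hv, hvL, hevbn]; push_cast; ring_nf
      exact_mod_cast (div_eq_div_iff hq0.ne' hQposR.ne').1 h1
    have he2 : ((-1:ℤ))^(n₀+1) * (-1)^(n₀+1) = 1 := by
      rw [← pow_add]; exact Even.neg_one_pow ⟨n₀+1, by ring⟩
    have hbez : (A*bn + A') * B - (B*bn + B') * A = -(-1:ℤ)^(n₀+1) := by linear_combination -hdet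
    have hcopPQ : IsCoprime (A*bn + A') (B*bn + B') :=
      ⟨-(-1:ℤ)^(n₀+1) * B, (-1:ℤ)^(n₀+1) * A, by linear_combination (-(-1:ℤ)^(n₀+1)) * hbez + he2⟩
    have hcoppq : IsCoprime p q := Int.isCoprime_iff_gcd_eq_one.mpr hcop
    have hqQ : q = B*bn + B' := by
      have h1 : q ∣ B*bn + B' := by
        have hd : q ∣ p * (B*bn + B') := ⟨A*bn + A', by linarith [hcross]⟩
        exact (hcoppq.symm.dvd_of_dvd_mul_left hd)
      have h2 : (B*bn + B') ∣ q := by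
        have hd : (B*bn + B') ∣ (A*bn + A') * q := ⟨p, by linarith [hcross]⟩
        exact (hcopPQ.symm.dvd_of_dvd_mul_left hd)
      exact Int.dvd_antisymm (le_of_lt hq) (le_of_lt hQpos) h1 h2
    have hpP : p = A*bn + A' := by
      have hq0' : q ≠ 0 := by omega
      have := hcross
      rw [← hqQ] at this
      exact mul_right_cancel₀ hq0' (by linarith [this])
    -- real quantities
    obtain ⟨ε, hεdef⟩ : ∃ e : ℝ, e = (-1:ℝ)^(n₀+1) := ⟨_, rfl⟩
    obtain ⟨δ, hδdef⟩ : ∃ d : ℝ, d = (q:ℝ)*α - p := ⟨_, rfl⟩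
    obtain ⟨δ', hδ'def⟩ : ∃ d : ℝ, d = (B:ℝ)*α - A := ⟨_, rfl⟩
    have hε2 : ε * ε = 1 := by
      rw [hεdef, ← pow_add]; exact Even.neg_one_pow ⟨n₀+1, by ring⟩
    have hεne : ε ≠ 0 := by intro h0; rw [h0] at hε2; simp at hε2
    have hd : 0 < ε * δ := by
      have hrw : ε * δ = (q:ℝ) * ((-1:ℝ)^(n₀+1) * (α - v)) := by
        rw [hεdef, hδdef, hv]; field_simp
      rw [hrw]
      exact mul_pos hq0 hsign'
    have hδne : δ ≠ 0 := by
      intro h0; rw [h0, mul_zero] at hd; exact lt_irrefl _ hd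
    have hεabs : |ε| = 1 := by rw [hεdef]; simp
    have habs : |δ| = ε * δ := by
      rw [← abs_of_pos hd, abs_mul, hεabs, one_mul]
    have hqd : (q:ℝ) * (ε * δ) < 2/3 := by
      rw [← habs, habs]
      calc (q:ℝ) * (ε*δ) = q * |δ| := by rw [habs]
        _ = q * |(q:ℝ)*α - p| := by rw [hδdef]
        _ < 2/3 := h
    -- the key Bezout identity over ℝ
    have hZR : (B:ℝ)*(p:ℝ) - (A:ℝ)*(q:ℝ) = -ε := by
      have hZ : B * p - A * q = -(-1:ℤ)^(n₀+1) := by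
        rw [hpP, hqQ]; linear_combination hbez
      rw [hεdef]; exact_mod_cast hZ
    have hkey : (q:ℝ)*δ' - (B:ℝ)*δ = -ε := by
      rw [hδdef, hδ'def]; linear_combination hZR
    have hqδ' : (q:ℝ)*(ε*δ') = (B:ℝ)*(ε*δ) - 1 := by
      linear_combination ε * hkey - hε2
    have h2B : (2*B : ℤ) ≤ q := by
      rw [hqQ]; nlinarith
    have h2BR : (2*(B:ℝ)) ≤ (q:ℝ) := by exact_mod_cast h2B
    have hBd : (B:ℝ)*(ε*δ) < 1/3 := by
      have hmul := mul_le_mul_of_nonneg_right h2BR hd.le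
      linarith
    have hδ'neg : ε * δ' < 0 := by
      by_contra hcon
      push_neg at hcon
      have := mul_nonneg hq0.le hcon
      linarith
    have hδ'ne : δ' ≠ 0 := by
      intro h0; rw [h0, mul_zero] at hδ'neg; exact lt_irrefl _ hδ'neg
    -- the complete quotient γ
    obtain ⟨γ, hγdef⟩ : ∃ g : ℝ, g = (bn:ℝ) - δ/δ' := ⟨_, rfl⟩
    have hratio : (ε*δ)/(ε*δ') = δ/δ' := mul_div_mul_left δ δ' hεne
    have hγsub : γ - bn = (ε*δ)/(-(ε*δ')) := by
      rw [hγdef, div_neg, hratio]; ring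
    have hγgt : (bn:ℝ) < γ := by
      have := div_pos hd (neg_pos.2 hδ'neg)
      linarith [hγsub ▸ this]
    have hγlt1 : γ - bn < 1 := by
      rw [hγsub, div_lt_one (neg_pos.2 hδ'neg)]
      have hsum : (q:ℝ) * (ε*δ + ε*δ') < 0 := by
        have : (q:ℝ)*(ε*δ) + (q:ℝ)*(ε*δ') < 0 := by
          rw [hqδ']; linarith
        linarith [this]
      have hsum2 : ε*δ + ε*δ' < 0 := by
        by_contra hcon
        push_neg at hcon
        have := mul_nonneg hq0.le hcon
        linarith
      linarith
    have hγpos : (0:ℝ) < γ := by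
      have : (2:ℝ) ≤ (bn:ℝ) := by exact_mod_cast hbn2
      linarith
    -- α = ev L γ
    obtain ⟨hdγ, hevγ⟩ := ev_cfA L γ hγpos hLtail
    simp only [hcf] at hdγ hevγ
    have hpR : (p:ℝ) = (A:ℝ)*bn + A' := by exact_mod_cast hpP
    have hqR : (q:ℝ) = (B:ℝ)*bn + B' := by exact_mod_cast hqQ
    have hγδ : δ' * γ = (bn:ℝ) * δ' - δ := by
      rw [hγdef]; field_simp
    have hBγ : (B:ℝ)*γ + B' = -ε/δ' := by
      rw [eq_div_iff hδ'ne]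
      linear_combination B * hγδ + hkey - δ' * hqR
    have hAγ : (A:ℝ)*γ + A' = -ε*α/δ' := by
      rw [eq_div_iff hδ'ne]
      have hE : (p:ℝ)*δ' - (A:ℝ)*δ = α * ((B:ℝ)*p - (A:ℝ)*q) := by
        rw [hδdef, hδ'def]; ring
      linear_combination A * hγδ - δ' * hpR + hE + α * hZR
    have hαγ : α = ev L γ := by
      rw [hevγ, hBγ, hAγ]
      field_simp
    -- the full list and the stream of α
    obtain ⟨β, hβdef⟩ : ∃ b : ℝ, b = (γ - bn)⁻¹ := ⟨_, rfl⟩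
    have hβ1 : 1 < β := by
      rw [hβdef]; exact one_lt_inv_iff₀.2 ⟨by linarith, by linarith⟩
    have hβinv : (bn:ℝ) + β⁻¹ = γ := by rw [hβdef, inv_inv]; ring
    have hαLf : α = ev (L ++ [bn]) β := by
      rw [ev_append, hβinv]; exact hαγ
    have hLftail : ∀ b ∈ (L ++ [bn]).tail, (1:ℤ) ≤ b := by
      rw [hL]
      intro c hc
      rcases (by simpa using hc : c ∈ lt ∨ c = bn) with hc' | rfl
      · exact hpos c hc'
      · omega
    have hLflen : (L ++ [bn]).length = n₀ + 2 := by simp [hLlen]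
    have hstr := stream_ev (L ++ [bn]) β α hβ1 hLftail hαLf
    -- floor of α
    obtain ⟨jp0, hjp0, hjb0⟩ := hstr 0 (by omega)
    have hflα : (⌊α⌋ : ℤ) = ⌊v⌋ := by
      rw [IntFractPair.stream_zero] at hjp0
      have : jp0 = IntFractPair.of α := by injection hjp0.symm
      rw [this] at hjb0
      have : (L ++ [bn])[0]? = some ⌊v⌋ := by rw [hL]; simp
      rw [this] at hjb0
      have := Option.some_injective _ hjb0
      exact this.symm
    -- the sequence entries of (of α)
    have hseq : ∀ k, k < n₀ + 1 → ∃ b : ℤ, (lt ++ [bn])[k]? = some b ∧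
        (GenContFract.of α).s.get? k = some ⟨1, (b:ℝ)⟩ := by
      intro k hk
      obtain ⟨jp, hjp, hjb⟩ := hstr (k+1) (by omega)
      refine ⟨jp.b, ?_, ?_⟩
      · rw [hL] at hjb
        simpa using hjb
      · exact GenContFract.get?_of_eq_some_of_succ_get?_intFractPair_stream hjp
    have hm : (lt ++ [bn]).length = n₀ + 1 := by simp [hlen]
    have hmpos : ∀ b ∈ lt ++ [bn], (1:ℤ) ≤ b := by
      intro c hc
      rcases List.mem_append.1 hc with hc' | hc'
      · exact hpos c hc'
      · have : c = bn := by simpa using hc'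
        omega
    have hconv := convs'Aux_eq (lt ++ [bn]) (GenContFract.of α).s hmpos (by rw [hm]; exact hseq)
    rw [hm] at hconv
    refine ⟨n₀ + 1, ?_⟩
    rw [GenContFract.of_convs_eq_convs']
    show (GenContFract.of α).h + convs'Aux (GenContFract.of α).s (n₀+1) = v
    rw [GenContFract.of_h_eq_floor, hflα, hconv]
    have : (⌊v⌋:ℝ) + (ew (lt ++ [bn]))⁻¹ = ew (⌊v⌋ :: (lt ++ [bn])) := by rw [ew_cons]
    rw [this]
    have hLcons : (⌊v⌋ :: (lt ++ [bn])) = L ++ [bn] := by rw [hL]; rfl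
    rw [hLcons, ew_append, ← hvL]
end

section
/- Let α be a real number and let p, q be relatively prime integers with q ≥ 1 such that |α − p/q| ≤ 1/((2 − (q−1)/q²)·q²). Then p/q is a convergent of α, except in the single case where α = [a₀; 2] = a₀ + 1/2 for some integer a₀ and p/q = a₀ + 1. In that exceptional case equality holds in the hypothesis, i.e., |α − p/q| = 1/((2 − (q−1)/q²)·q²), and p/q is a nearest mediant of α. -/
/-! Away from `q = 1, α = p - 1/2`, the hypothesis is strictly stronger than the bound
`|α - p/q| < 1/(q(2q - 1))` of the technical form of Legendre's theorem in Mathlib, because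
`(2 - (q-1)/q²) q² = 2q² - q + 1 > q(2q - 1)`; for `q = 1` that form also requires
`α - p > -1/2`, which fails exactly in the exceptional case. There `α = [p - 1; 2]`, whose first
mediant `((p - 1)·1 + 1)/(1·1 + 0)` is `p`. -/

open GenContFract

lemma two_sub_div_sq_mul_sq {K : Type*} [Field K] {q : K} (hq : q ≠ 0) :
    (2 - (q - 1) / q ^ 2) * q ^ 2 = 2 * q ^ 2 - q + 1 := by
  field_simp
  ring

lemma one_div_two_mul_sq_sub_add_one_lt {q : ℝ} (hq : 1 ≤ q) :
    1 / (2 * q ^ 2 - q + 1) < (q * (2 * q - 1))⁻¹ := by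
  rw [one_div]
  exact inv_strictAnti₀ (by nlinarith) (by nlinarith)

namespace Real

lemma isConvergentOf_of_contfracLegendreAss {α : ℝ} {p q : ℤ} (hq : 0 ≤ q)
    (h : ContfracLegendre.Ass α p q) : α.IsConvergentOf (p / q) := by
  lift q to ℕ using hq
  obtain ⟨n, hn⟩ := exists_rat_eq_convergent' h
  refine ⟨n, ?_⟩
  rw [convs_eq_convergent, ← hn]
  push_cast
  rfl

lemma contfracLegendreAss_of_abs_sub_le {α : ℝ} {p q : ℤ} (hq : 1 ≤ q) (hcop : IsCoprime p q)
    (h : |α - p / q| ≤ 1 / (2 * (q : ℝ) ^ 2 - q + 1)) (hex : ¬(q = 1 ∧ α = p - 1 / 2)) :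
    ContfracLegendre.Ass α p q := by
  refine ⟨hcop, fun hq1 => ?_,
    h.trans_lt (one_div_two_mul_sq_sub_add_one_lt (by exact_mod_cast hq))⟩
  subst hq1
  have hlow : -(1 / 2) ≤ α - p := by simpa using (abs_le.mp h).1
  have hne : α - p ≠ -(1 / 2) := fun heq => hex ⟨rfl, by linarith⟩
  exact lt_of_le_of_ne hlow hne.symm

lemma isNearestMediantOf_intCast_add_half (a : ℤ) :
    IsNearestMediantOf (a + 1 / 2) (a + 1) := by
  set α : ℝ := a + 1 / 2 with hα
  have hfloor : ⌊α⌋ = a := by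
    rw [Int.floor_eq_iff]
    constructor <;> linarith
  have hfract : Int.fract α = 1 / 2 := by
    rw [Int.fract, hfloor]
    ring
  have hhead := of_s_head (v := α) (by rw [hfract]; norm_num)
  refine ⟨0, 1, 2, ?_, le_rfl, by norm_num, Or.inl (by norm_num), ?_⟩
  · change ((GenContFract.of α).s.map Pair.b).get? 0 = some 2
    rw [Stream'.Seq.map_get?, ← Stream'.Seq.head.eq_1, hhead, hfract]
    norm_num
  · rw [zeroth_contAux_eq_one_zero, first_contAux_eq_h_one, of_h_eq_floor, hfloor]
    simp

end Real

/-- **Refined Legendre theorem (Theorem 1).** Let `p, q` be coprime integers with `q ≥ 1`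
and `|α - p/q| ≤ 1/((2 - (q-1)/q²)·q²)`. Then `p/q` is a convergent of `α`, except in the
single case `α = [a₀; 2] = a₀ + 1/2` and `p/q = a₀ + 1`; in that case equality holds in the
hypothesis and `p/q` is a nearest mediant of `α`. -/
theorem refined_legendre (α : ℝ) (p q : ℤ) (hq : 1 ≤ q) (hcop : Int.gcd p q = 1)
    (h : |α - (p : ℝ) / q| ≤ 1 / ((2 - ((q : ℝ) - 1) / (q : ℝ) ^ 2) * (q : ℝ) ^ 2)) :
    Real.IsConvergentOf α ((p : ℝ) / q) ∨
      ((∃ a₀ : ℤ, α = (a₀ : ℝ) + 1 / 2 ∧ (p : ℝ) / q = (a₀ : ℝ) + 1) ∧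
        |α - (p : ℝ) / q| = 1 / ((2 - ((q : ℝ) - 1) / (q : ℝ) ^ 2) * (q : ℝ) ^ 2) ∧
        Real.IsNearestMediantOf α ((p : ℝ) / q)) := by
  rw [two_sub_div_sq_mul_sq (by positivity)] at h ⊢
  by_cases hex : q = 1 ∧ α = p - 1 / 2
  · obtain ⟨rfl, hα⟩ := hex
    have hα' : α = ((p - 1 : ℤ) : ℝ) + 1 / 2 := by push_cast; linarith
    have hp : (p : ℝ) / (1 : ℤ) = ((p - 1 : ℤ) : ℝ) + 1 := by push_cast; ring
    refine Or.inr ⟨⟨p - 1, hα', hp⟩, ?_, ?_⟩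
    · rw [hα]
      norm_num
    · rw [hα', hp]
      exact Real.isNearestMediantOf_intCast_add_half (p - 1)
  · exact Or.inl <| Real.isConvergentOf_of_contfracLegendreAss (by omega) <|
      Real.contfracLegendreAss_of_abs_sub_le hq (Int.isCoprime_iff_gcd_eq_one.mpr hcop) h hex
end

section
/- Let α = [a₀; a₁, a₂, …] be a real number with convergents pₖ/qₖ, let n ≥ 1, m ≥ 0, and let p/q = [a₀; a₁, …, a_{n−1}, b_n, b_{n+1}, …, b_{n+m}] be an irreducible fraction with positive integer partial quotients b_n, …, b_{n+m}, b_{n+m} ≥ 2, and b_n ≠ a_n. Set r = [0; a_{n+1}, a_{n+2}, …] (with r = 0 if a_{n+1} does not exist) and d/c = [0; b_{n+1}, …, b_{n+m}] in lowest terms (with d = 0, c = 1 if m = 0). Then q = (c·b_n + d)·q_{n−1} + c·q_{n−2} and |α − p/q| = (1/q²) · c / ( 1/|c(b_n − a_n − r) + d| + (q_{n−1}/q)·sgn(a_n − b_n) ). -/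
open GenContFract

def cpStep (x : ℤ) (s : (ℤ × ℤ) × (ℤ × ℤ)) : (ℤ × ℤ) × (ℤ × ℤ) :=
  (s.2, (x * s.2.1 + s.1.1, x * s.2.2 + s.1.2))

def cp : List ℤ → (ℤ × ℤ) × (ℤ × ℤ) → (ℤ × ℤ) × (ℤ × ℤ)
  | [], s => s
  | x :: xs, s => cp xs (cpStep x s)

noncomputable def vT : List ℤ → ℝ → ℝ
  | [], t => t
  | x :: xs, t => (x : ℝ) + 1 / vT xs t

lemma cp_append (l₁ l₂ : List ℤ) (s : (ℤ × ℤ) × (ℤ × ℤ)) :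
    cp (l₁ ++ l₂) s = cp l₂ (cp l₁ s) := by
  induction l₁ generalizing s with
  | nil => rfl
  | cons x xs ih => simp [cp, ih]

lemma cfVal_split (l : List ℤ) (a x : ℤ) (xs : List ℤ) :
    cfVal a (l ++ x :: xs) = vT (a :: l) (cfVal x xs) := by
  induction l generalizing a with
  | nil => rfl
  | cons y l ih =>
    show cfVal a (y :: (l ++ x :: xs)) = _
    rw [cfVal, ih y]
    rfl

lemma one_le_vT (l : List ℤ) (t : ℝ) (hl : ∀ x ∈ l, (1:ℤ) ≤ x) (ht : 1 ≤ t) :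
    1 ≤ vT l t := by
  induction l with
  | nil => exact ht
  | cons x xs ih =>
    have h1 : 1 ≤ vT xs t := ih fun y hy => hl y (List.mem_cons_of_mem _ hy)
    have hx : (1:ℝ) ≤ (x:ℝ) := by exact_mod_cast hl x (List.mem_cons_self)
    have h0 : (0:ℝ) < vT xs t := lt_of_lt_of_le one_pos h1
    have : 0 ≤ 1 / vT xs t := by positivity
    rw [vT]
    linarith

lemma vT_eq (l : List ℤ) (t : ℝ) (hl : ∀ x ∈ l.tail, (1:ℤ) ≤ x) (ht : 1 ≤ t)
    (s : (ℤ × ℤ) × (ℤ × ℤ)) :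
    (vT l t * ((s.2.1 : ℤ) : ℝ) + ((s.1.1 : ℤ) : ℝ)) /
      (vT l t * ((s.2.2 : ℤ) : ℝ) + ((s.1.2 : ℤ) : ℝ)) =
    (t * (((cp l s).2.1 : ℤ) : ℝ) + (((cp l s).1.1 : ℤ) : ℝ)) /
      (t * (((cp l s).2.2 : ℤ) : ℝ) + (((cp l s).1.2 : ℤ) : ℝ)) := by
  induction l generalizing s with
  | nil => rfl
  | cons x xs ih =>
    have hxs : ∀ y ∈ xs, (1:ℤ) ≤ y := hl
    have hu : 1 ≤ vT xs t := one_le_vT xs t hxs ht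
    have hu0 : vT xs t ≠ 0 := by intro h; rw [h] at hu; norm_num at hu
    rw [show cp (x :: xs) s = cp xs (cpStep x s) from rfl,
      ← ih (fun y hy => hxs y (List.mem_of_mem_tail hy)) (cpStep x s)]
    rw [show vT (x :: xs) t = (x : ℝ) + 1 / vT xs t from rfl]
    set u := vT xs t with hudef
    simp only [cpStep]
    push_cast
    rw [← mul_div_mul_right _ _ hu0]
    congr 1 <;> field_simp <;> ring

lemma vT_eq' (l : List ℤ) (t : ℝ) (hl : ∀ x ∈ l.tail, (1:ℤ) ≤ x) (ht : 1 ≤ t) :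
    vT l t = (t * (((cp l ((0,1),(1,0))).2.1 : ℤ) : ℝ) + (((cp l ((0,1),(1,0))).1.1 : ℤ) : ℝ)) /
      (t * (((cp l ((0,1),(1,0))).2.2 : ℤ) : ℝ) + (((cp l ((0,1),(1,0))).1.2 : ℤ) : ℝ)) := by
  have h := vT_eq l t hl ht ((0,1),(1,0))
  norm_num at h
  exact h

lemma cp_succ (a : ℕ → ℤ) (k : ℕ) (s : (ℤ × ℤ) × (ℤ × ℤ)) :
    cp (List.map a (List.range (k+1))) s = cpStep (a k) (cp (List.map a (List.range k)) s) := by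
  rw [List.range_succ, List.map_append, cp_append]; rfl

lemma cp_fst (a : ℕ → ℤ) (k : ℕ) (s : (ℤ × ℤ) × (ℤ × ℤ)) :
    (cp (List.map a (List.range (k+1))) s).1 = (cp (List.map a (List.range k)) s).2 := by
  rw [cp_succ]; rfl

lemma cp_pos (a : ℕ → ℤ) (n : ℕ) (ha : ∀ k, 1 ≤ k → k < n → 1 ≤ a k) :
    ∀ k, 1 ≤ k → k ≤ n →
      0 ≤ (cp (List.map a (List.range k)) ((0,1),(1,0))).1.2 ∧
      1 ≤ (cp (List.map a (List.range k)) ((0,1),(1,0))).2.2 := by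
  intro k
  induction k with
  | zero => omega
  | succ k ih =>
    intro _ hkn
    rcases Nat.eq_zero_or_pos k with rfl | hk
    · simp [cp, cpStep]
    · obtain ⟨h1, h2⟩ := ih hk (by omega)
      have haK : 1 ≤ a k := ha k hk (by omega)
      rw [cp_succ]
      refine ⟨by simp [cpStep]; omega, ?_⟩
      show 1 ≤ a k * (cp (List.map a (List.range k)) ((0,1),(1,0))).2.2 +
        (cp (List.map a (List.range k)) ((0,1),(1,0))).1.2
      nlinarith

lemma cp_det (a : ℕ → ℤ) : ∀ k,
    (cp (List.map a (List.range k)) ((0,1),(1,0))).2.1 *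
      (cp (List.map a (List.range k)) ((0,1),(1,0))).1.2 -
    (cp (List.map a (List.range k)) ((0,1),(1,0))).2.2 *
      (cp (List.map a (List.range k)) ((0,1),(1,0))).1.1 = 1 ∨
    (cp (List.map a (List.range k)) ((0,1),(1,0))).2.1 *
      (cp (List.map a (List.range k)) ((0,1),(1,0))).1.2 -
    (cp (List.map a (List.range k)) ((0,1),(1,0))).2.2 *
      (cp (List.map a (List.range k)) ((0,1),(1,0))).1.1 = -1 := by
  intro k
  induction k with
  | zero => left; rfl
  | succ k ih =>
    rw [cp_succ]
    simp only [cpStep]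
    rcases ih with h | h
    · right; linear_combination -h
    · left; linear_combination -h

lemma contsAux_eq_cp (α : ℝ) (n : ℕ) (a : ℕ → ℤ)
    (ha : ∀ k, k ≤ n → ∃ ip : IntFractPair ℝ, IntFractPair.stream α k = some ip ∧ ip.b = a k) :
    ∀ k, k ≤ n → (GenContFract.of α).contsAux k =
      ⟨(((cp (List.map a (List.range k)) ((0,1),(1,0))).2.1 : ℤ) : ℝ),
       (((cp (List.map a (List.range k)) ((0,1),(1,0))).2.2 : ℤ) : ℝ)⟩ := by
  intro k
  induction k using Nat.strong_induction_on with
  | _ k ih =>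
    match k with
    | 0 => intro _; simp [contsAux, cp]
    | 1 =>
      intro _
      obtain ⟨ip, hst, hb⟩ := ha 0 (by omega)
      have hip : ip = IntFractPair.of α := by
        have h0 : IntFractPair.stream α 0 = some (IntFractPair.of α) := rfl
        rw [h0] at hst; exact (Option.some_injective _ hst).symm
      have hh : (GenContFract.of α).h = ((a 0 : ℤ) : ℝ) := by
        rw [of_h_eq_floor, ← hb, hip]; rfl
      rw [show (GenContFract.of α).contsAux 1 = ⟨(GenContFract.of α).h, 1⟩ from rfl, hh]
      norm_num [cp, cpStep]
    | k+2 =>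
      intro h
      obtain ⟨ip, hst, hb⟩ := ha (k+1) (by omega)
      have hs : (GenContFract.of α).s.get? k = some ⟨1, ((a (k+1) : ℤ) : ℝ)⟩ := by
        have := get?_of_eq_some_of_succ_get?_intFractPair_stream hst
        rwa [hb] at this
      have h1 := ih k (by omega) (by omega)
      have h2 := ih (k+1) (by omega) (by omega)
      rw [contsAux_recurrence hs h1 h2, cp_succ a (k+1), cp_succ a k]
      simp only [cpStep, Pair.mk.injEq]
      constructor <;> push_cast <;> ring

/-- The key identity from the proof of the refined Legendre theorem. Let
`α = [a₀; a₁, a₂, …]`, `n ≥ 1`, and let `p/q = [a₀; …, a_{n-1}, b_n, …, b_{n+m}]` be an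
irreducible fraction with positive partial quotients, `b_{n+m} ≥ 2`, `b_n ≠ a_n`. With
`r = [0; a_{n+1}, …]` (the fractional part at stage `n` of the continued fraction algorithm,
`r = 0` if `a_{n+1}` does not exist) and `d/c = [0; b_{n+1}, …, b_{n+m}]` in lowest terms
(`d = 0`, `c = 1` if `m = 0`), one has `q = (c·b_n + d)·q_{n-1} + c·q_{n-2}` and
`|α - p/q| = (1/q²)·c/(1/|c(b_n - a_n - r) + d| + (q_{n-1}/q)·sgn(a_n - b_n))`,
where `q_{n-1} = ((of α).contsAux n).b` and `q_{n-2} = ((of α).contsAux (n-1)).b`. -/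
theorem key_identity (α : ℝ) (n m : ℕ) (hn : 1 ≤ n) (a : ℕ → ℤ) (r : ℝ)
    (ha : ∀ k, k ≤ n → ∃ ip : IntFractPair ℝ, IntFractPair.stream α k = some ip ∧ ip.b = a k)
    (hr : ∃ ip : IntFractPair ℝ, IntFractPair.stream α n = some ip ∧ ip.fr = r)
    (b : ℕ → ℤ) (hb : ∀ k, n ≤ k → k ≤ n + m → 1 ≤ b k) (hblast : 2 ≤ b (n + m))
    (hbn : b n ≠ a n)
    (p q : ℤ) (hq : 1 ≤ q) (hcop : Int.gcd p q = 1)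
    (hpq : (p : ℝ) / q =
      cfVal (a 0) (List.map a (List.range' 1 (n - 1)) ++ List.map b (List.range' n (m + 1))))
    (c d : ℤ) (hc : 1 ≤ c) (hd : 0 ≤ d) (hdc : d < c) (hcdcop : Int.gcd d c = 1)
    (hcd : (d : ℝ) / c = cfVal 0 (List.map b (List.range' (n + 1) m))) :
    (q : ℝ) = ((c * b n + d : ℤ) : ℝ) * ((GenContFract.of α).contsAux n).b +
        (c : ℝ) * ((GenContFract.of α).contsAux (n - 1)).b ∧
      |α - (p : ℝ) / q| = 1 / (q : ℝ) ^ 2 *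
        ((c : ℝ) /
          (1 / |(c : ℝ) * ((b n : ℝ) - (a n : ℝ) - r) + (d : ℝ)| +
            ((GenContFract.of α).contsAux n).b / (q : ℝ) * ((a n - b n : ℤ).sign : ℝ))) := by
  obtain ⟨n', rfl⟩ : ∃ n', n = n' + 1 := ⟨n - 1, by omega⟩
  simp only [Nat.add_sub_cancel] at hpq ⊢
  -- stream facts
  obtain ⟨ipn, hstn, hfr⟩ := hr
  obtain ⟨ipn', hstn', hbn'⟩ := ha (n'+1) le_rfl
  have hipeq : ipn = ipn' := by rw [hstn] at hstn'; exact Option.some_injective _ hstn'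
  have hban : ipn.b = a (n'+1) := by rw [hipeq]; exact hbn'
  have ha1 : ∀ k, 1 ≤ k → k ≤ n'+1 → 1 ≤ a k := by
    intro k h1 h2
    obtain ⟨ip, hstk, hbk⟩ := ha k h2
    obtain ⟨k', rfl⟩ : ∃ k', k = k'+1 := ⟨k-1, by omega⟩
    rw [← hbk]
    exact IntFractPair.one_le_succ_nth_stream_b hstk
  -- continuants
  have hC1 := contsAux_eq_cp α (n'+1) a ha (n'+1) le_rfl
  have hC0raw := contsAux_eq_cp α (n'+1) a ha n' (by omega)
  have hfst := cp_fst a n' ((0,1),(1,0))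
  have hdet := cp_det a (n'+1)
  obtain ⟨hQ'0, hQ1⟩ := cp_pos a (n'+1) (fun k hk1 hk2 => ha1 k hk1 (by omega)) (n'+1)
    (by omega) le_rfl
  -- the tail-value lemma instance
  have hbn1 : 1 ≤ b (n'+1) := hb (n'+1) le_rfl (by omega)
  have hcr : (0:ℝ) < (c:ℝ) := by exact_mod_cast lt_of_lt_of_le zero_lt_one hc
  have hdr : (0:ℝ) ≤ (d:ℝ) := by exact_mod_cast hd
  have hsR1 : (1:ℝ) ≤ (b (n'+1) : ℝ) + (d:ℝ)/c := by
    have h1 : (1:ℝ) ≤ (b (n'+1):ℝ) := by exact_mod_cast hbn1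
    have h2 : (0:ℝ) ≤ (d:ℝ)/c := div_nonneg hdr hcr.le
    linarith
  have hhead : (a 0 :: List.map a (List.range' 1 n')) = List.map a (List.range (n'+1)) := by
    rw [List.range_eq_range', List.range'_succ]
    simp
  have htail : ∀ x ∈ (List.map a (List.range (n'+1))).tail, (1:ℤ) ≤ x := by
    intro x hx
    rw [← hhead] at hx
    simp only [List.tail_cons, List.mem_map] at hx
    obtain ⟨k, hk, rfl⟩ := hx
    rw [List.mem_range'_1] at hk
    exact ha1 k (by omega) (by omega)
  have hvT := vT_eq' (List.map a (List.range (n'+1))) ((b (n'+1) : ℝ) + (d:ℝ)/c)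
    htail hsR1
  -- abstract the continuants
  set S := cp (List.map a (List.range (n'+1))) ((0,1),(1,0)) with hSdef
  set S0 := cp (List.map a (List.range n')) ((0,1),(1,0)) with hS0def
  rw [← hfst] at hC0raw
  clear hfst hS0def hSdef
  obtain ⟨⟨P', Q'⟩, P, Q⟩ := S
  dsimp only at hC1 hC0raw hdet hQ'0 hQ1 hvT
  -- basic real facts
  have hanr : (1:ℝ) ≤ (a (n'+1) : ℝ) := by exact_mod_cast ha1 (n'+1) (by omega) le_rfl
  have hr01 : 0 ≤ r ∧ r < 1 := by
    rw [← hfr]; exact IntFractPair.nth_stream_fr_nonneg_lt_one hstn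
  have hQr : (1:ℝ) ≤ (Q:ℝ) := by exact_mod_cast hQ1
  have hQ'r : (0:ℝ) ≤ (Q':ℝ) := by exact_mod_cast hQ'0
  have hqr0 : (0:ℝ) < (q:ℝ) := by exact_mod_cast lt_of_lt_of_le zero_lt_one hq
  -- α formula
  have hs' : (GenContFract.of α).s.get? n' = some ⟨1, ((a (n'+1) : ℤ) : ℝ)⟩ := by
    have := get?_of_eq_some_of_succ_get?_intFractPair_stream hstn
    rwa [hban] at this
  have hC2 : (GenContFract.of α).contsAux (n'+2) =
      ⟨((a (n'+1):ℤ):ℝ) * P + P', ((a (n'+1):ℤ):ℝ) * Q + Q'⟩ := by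
    rw [contsAux_recurrence hs' hC0raw hC1]
    simp only [Pair.mk.injEq]
    constructor <;> push_cast <;> ring
  have htR1 : (1:ℝ) ≤ (a (n'+1):ℝ) + r := by linarith [hr01.1]
  have hD1pos : (0:ℝ) < ((a (n'+1):ℝ) + r) * Q + Q' := by nlinarith
  have hα : α = (((a (n'+1):ℝ) + r) * P + P') / (((a (n'+1):ℝ) + r) * Q + Q') := by
    have hcev := compExactValue_correctness_of_stream_eq_some hstn
    rw [hfr] at hcev
    by_cases hr0 : r = 0
    · rw [GenContFract.compExactValue, if_pos hr0] at hcev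
      rw [hcev, hC2, hr0]
      norm_num
    · simp only [GenContFract.compExactValue, if_neg hr0] at hcev
      rw [hC1, hC2] at hcev
      simp only [nextConts, nextNum, nextDen] at hcev
      rw [hcev]
      have hrpos : 0 < r := lt_of_le_of_ne hr01.1 (Ne.symm hr0)
      have hQQ' : (0:ℝ) < (a (n'+1):ℝ) * Q + Q' := by nlinarith
      have hrinv : (0:ℝ) < r⁻¹ := by positivity
      have hd1 : (0:ℝ) < r⁻¹ * ((a (n'+1):ℝ) * Q + Q') + 1 * Q := by nlinarith
      rw [div_eq_div_iff hd1.ne' hD1pos.ne']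
      field_simp
      ring
  -- p/q formula
  have hsval : cfVal (b (n'+1)) (List.map b (List.range' (n'+1+1) m))
      = (b (n'+1) : ℝ) + (d:ℝ)/c := by
    rcases hmL : List.map b (List.range' (n'+1+1) m) with _ | ⟨x, xs⟩
    · rw [hmL] at hcd
      have h0 : (d:ℝ)/c = 0 := by rw [hcd]; simp [cfVal]
      rw [h0, cfVal]
      norm_num
    · rw [hmL] at hcd
      rw [cfVal, hcd, cfVal]
      push_cast
      ring
  have hlist : List.map a (List.range' 1 n') ++ List.map b (List.range' (n'+1) (m + 1))
      = List.map a (List.range' 1 n') ++ (b (n'+1) :: List.map b (List.range' (n'+1+1) m)) := by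
    rw [List.range'_succ]
    simp
  have hpq2 : (p:ℝ)/q = (((b (n'+1) : ℝ) + (d:ℝ)/c) * P + P') /
      (((b (n'+1) : ℝ) + (d:ℝ)/c) * Q + Q') := by
    rw [hpq, hlist, cfVal_split, hhead, hsval, hvT]
  clear hvT hpq hsval hlist htail hhead hcd ha hstn' hbn' hipeq
  -- integer identification of p and q
  have hbnr : (1:ℝ) ≤ (b (n'+1):ℝ) := by exact_mod_cast hbn1
  have hu1 : 1 ≤ c * b (n'+1) + d := by
    have h1 : (1:ℤ)*1 ≤ c * b (n'+1) := mul_le_mul hc hbn1 zero_le_one (by linarith)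
    linarith
  have hDq1 : 1 ≤ (c * b (n'+1) + d) * Q + c * Q' := by
    have h1 : (1:ℤ)*1 ≤ (c * b (n'+1) + d) * Q := mul_le_mul hu1 hQ1 zero_le_one (by linarith)
    have h2 : (0:ℤ) ≤ c * Q' := mul_nonneg (by linarith) hQ'0
    linarith
  have hDqr0 : (0:ℝ) < (((c * b (n'+1) + d) * Q + c * Q' : ℤ):ℝ) := by
    exact_mod_cast lt_of_lt_of_le zero_lt_one hDq1
  have hD2pos : (0:ℝ) < ((b (n'+1) : ℝ) + (d:ℝ)/c) * Q + Q' := by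
    have h1 : (1:ℝ)*1 ≤ ((b (n'+1) : ℝ) + (d:ℝ)/c) * Q :=
      mul_le_mul hsR1 hQr zero_le_one (by linarith)
    linarith
  have hND : (p:ℝ)/q = (((c * b (n'+1) + d) * P + c * P' : ℤ):ℝ) /
      (((c * b (n'+1) + d) * Q + c * Q' : ℤ):ℝ) := by
    rw [hpq2, div_eq_div_iff hD2pos.ne' hDqr0.ne']
    push_cast
    field_simp
  have hcross : p * ((c * b (n'+1) + d) * Q + c * Q')
      = ((c * b (n'+1) + d) * P + c * P') * q := by
    have h := hND
    rw [div_eq_div_iff hqr0.ne' hDqr0.ne'] at h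
    exact_mod_cast h
  have hcop_uc : IsCoprime (c * b (n'+1) + d) c := by
    have h1 : IsCoprime d c := Int.isCoprime_iff_gcd_eq_one.2 hcdcop
    have h2 := h1.add_mul_left_left (b (n'+1))
    rwa [add_comm] at h2
  have he2 : (P*Q' - Q*P') * (P*Q' - Q*P') = 1 := by
    rcases hdet with h | h <;> rw [h] <;> norm_num
  have hcopN : IsCoprime ((c * b (n'+1) + d) * P + c * P')
      ((c * b (n'+1) + d) * Q + c * Q') := by
    obtain ⟨x, y, hxy⟩ := hcop_uc
    exact ⟨x*(P*Q'-Q*P')*Q' - y*(P*Q'-Q*P')*Q, y*(P*Q'-Q*P')*P - x*(P*Q'-Q*P')*P',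
      by linear_combination (P*Q'-Q*P')*(P*Q'-Q*P')*hxy + he2⟩
  have hcop_pq : IsCoprime q p := (Int.isCoprime_iff_gcd_eq_one.2 hcop).symm
  have hdvd1 : q ∣ (c * b (n'+1) + d) * Q + c * Q' := by
    apply hcop_pq.dvd_of_dvd_mul_left
    exact ⟨(c * b (n'+1) + d) * P + c * P', by linear_combination hcross⟩
  have hdvd2 : ((c * b (n'+1) + d) * Q + c * Q') ∣ q := by
    apply hcopN.symm.dvd_of_dvd_mul_left
    exact ⟨p, by linear_combination -hcross⟩
  have hqeq : q = (c * b (n'+1) + d) * Q + c * Q' :=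
    Int.dvd_antisymm (by omega) (by omega) hdvd1 hdvd2
  constructor
  · rw [hC1, hC0raw]
    show (q:ℝ) = ((c * b (n'+1) + d : ℤ):ℝ) * (Q:ℝ) + (c:ℝ) * (Q':ℝ)
    rw [hqeq]; push_cast; ring
  · rw [hC1]
    show |α - (p:ℝ)/q| = 1/(q:ℝ)^2 * ((c:ℝ) /
      (1 / |(c:ℝ) * ((b (n'+1) : ℝ) - (a (n'+1) : ℝ) - r) + (d:ℝ)| +
        (Q:ℝ)/(q:ℝ) * ((a (n'+1) - b (n'+1) : ℤ).sign : ℝ)))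
    set tR : ℝ := (a (n'+1):ℝ) + r with htRdef
    set sR : ℝ := (b (n'+1):ℝ) + (d:ℝ)/c with hsRdef
    have hqrR : (q:ℝ) = (c:ℝ) * (sR * Q + Q') := by
      rw [hqeq]
      push_cast
      rw [hsRdef]
      field_simp
    have hDrkey : (c:ℝ) * ((b (n'+1):ℝ) - (a (n'+1):ℝ) - r) + d = (c:ℝ) * (sR - tR) := by
      rw [hsRdef, htRdef]; field_simp; ring
    have hdltc : (d:ℝ)/c < 1 := (div_lt_one hcr).2 (by exact_mod_cast hdc)
    have habs : |(c:ℝ) * ((b (n'+1):ℝ) - (a (n'+1):ℝ) - r) + d| *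
        ((a (n'+1) - b (n'+1) : ℤ).sign : ℝ)
          = -((c:ℝ) * ((b (n'+1):ℝ) - (a (n'+1):ℝ) - r) + d) ∧
        (c:ℝ) * ((b (n'+1):ℝ) - (a (n'+1):ℝ) - r) + d ≠ 0 := by
      rcases hbn.lt_or_gt with hlt | hlt
      · have h1 : (b (n'+1):ℝ) + 1 ≤ (a (n'+1):ℝ) := by
          exact_mod_cast (by omega : b (n'+1) + 1 ≤ a (n'+1))
        have hneg : (c:ℝ) * ((b (n'+1):ℝ) - (a (n'+1):ℝ) - r) + d < 0 := by
          rw [hDrkey]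
          apply mul_neg_of_pos_of_neg hcr
          rw [hsRdef, htRdef]
          have := hr01.1
          linarith [hdltc]
        have hs1 : (a (n'+1) - b (n'+1) : ℤ).sign = 1 := Int.sign_eq_one_iff_pos.2 (by omega)
        rw [hs1]
        refine ⟨?_, hneg.ne⟩
        rw [abs_of_neg hneg]; push_cast; ring
      · have h1 : (a (n'+1):ℝ) + 1 ≤ (b (n'+1):ℝ) := by
          exact_mod_cast (by omega : a (n'+1) + 1 ≤ b (n'+1))
        have hpos : 0 < (c:ℝ) * ((b (n'+1):ℝ) - (a (n'+1):ℝ) - r) + d := by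
          rw [hDrkey]
          apply mul_pos hcr
          rw [hsRdef, htRdef]
          have h2 : (0:ℝ) ≤ (d:ℝ)/c := div_nonneg hdr hcr.le
          linarith [hr01.2]
        have hs1 : (a (n'+1) - b (n'+1) : ℤ).sign = -1 :=
          Int.sign_eq_neg_one_iff_neg.2 (by omega)
        rw [hs1]
        refine ⟨?_, hpos.ne'⟩
        rw [abs_of_pos hpos]; push_cast; ring
    obtain ⟨habs, hDr0⟩ := habs
    have habspos : 0 < |(c:ℝ) * ((b (n'+1):ℝ) - (a (n'+1):ℝ) - r) + d| := abs_pos.2 hDr0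
    have hkey : (q:ℝ) - (Q:ℝ) * ((c:ℝ) * ((b (n'+1):ℝ) - (a (n'+1):ℝ) - r) + d)
        = (c:ℝ) * (tR * Q + Q') := by
      rw [hqrR, hDrkey]; ring
    have herabs : |(P:ℝ) * Q' - (Q:ℝ) * P'| = 1 := by
      have hcast : ((P:ℝ) * Q' - (Q:ℝ) * P') = ((P * Q' - Q * P' : ℤ) : ℝ) := by
        push_cast; ring
      rw [hcast]
      rcases hdet with h | h <;> rw [h] <;> norm_num
    have hsub : α - (p:ℝ)/q = (tR - sR) * ((P:ℝ) * Q' - (Q:ℝ) * P') /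
        ((tR * Q + Q') * (sR * Q + Q')) := by
      rw [hα, hpq2, div_sub_div _ _ hD1pos.ne' hD2pos.ne']
      congr 1
      ring
    have hLHS : |α - (p:ℝ)/q| = |(c:ℝ) * ((b (n'+1):ℝ) - (a (n'+1):ℝ) - r) + d| /
        ((q:ℝ) * (tR * Q + Q')) := by
      rw [hsub, abs_div, abs_mul, herabs, mul_one,
        abs_of_pos (mul_pos hD1pos hD2pos), hDrkey, abs_mul, abs_of_pos hcr, hqrR]
      rw [abs_sub_comm sR tR]
      rw [div_eq_div_iff (mul_pos hD1pos hD2pos).ne'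
        (mul_pos (mul_pos hcr hD2pos) hD1pos).ne']
      ring
    rw [hLHS]
    have hsum : 1 / |(c:ℝ) * ((b (n'+1):ℝ) - (a (n'+1):ℝ) - r) + d| +
        (Q:ℝ)/(q:ℝ) * ((a (n'+1) - b (n'+1) : ℤ).sign : ℝ) =
        ((c:ℝ) * (tR * Q + Q')) /
          ((q:ℝ) * |(c:ℝ) * ((b (n'+1):ℝ) - (a (n'+1):ℝ) - r) + d|) := by
      rw [div_mul_eq_mul_div, div_add_div _ _ habspos.ne' hqr0.ne']
      rw [show (1:ℝ) * q + |(c:ℝ) * ((b (n'+1):ℝ) - (a (n'+1):ℝ) - r) + d| *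
          ((Q:ℝ) * ((a (n'+1) - b (n'+1) : ℤ).sign : ℝ))
          = (q:ℝ) - (Q:ℝ) * ((c:ℝ) * ((b (n'+1):ℝ) - (a (n'+1):ℝ) - r) + d) from by
        linear_combination (Q:ℝ) * habs]
      rw [hkey, mul_comm (|(c:ℝ) * ((b (n'+1):ℝ) - (a (n'+1):ℝ) - r) + d|) (q:ℝ)]
    rw [hsum, div_div_eq_mul_div]
    field_simp
end

section
/- Let α = [a₀; a₁, a₂, …] be a real number with convergents pₖ/qₖ, let n ≥ 1 and m ≥ 1, and let p/q = [a₀; a₁, …, a_{n−1}, b_n, b_{n+1}, …, b_{n+m}] be an irreducible fraction with positive integer partial quotients b_n, …, b_{n+m} and b_{n+m} ≥ 2. If b_n < a_n, then |α − p/q| ≥ 3/(2q²). -/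
open GenContFract

/-- Continuant matrix of `[a; L]`: `((p, p'), (q, q'))` where `p/q` is the value
and `p'/q'` the previous convergent. -/
def cm : ℤ → List ℤ → (ℤ × ℤ) × (ℤ × ℤ)
  | a, [] => ((a, 1), (1, 0))
  | a, x :: xs =>
    ((a * (cm x xs).1.1 + (cm x xs).2.1, a * (cm x xs).1.2 + (cm x xs).2.2),
      ((cm x xs).1.1, (cm x xs).1.2))

lemma cm_pos : ∀ (l : List ℤ) (a : ℤ), 1 ≤ a → (∀ y ∈ l, 1 ≤ y) →
    1 ≤ (cm a l).1.1 ∧ 1 ≤ (cm a l).1.2 ∧ 1 ≤ (cm a l).2.1 ∧ 0 ≤ (cm a l).2.2 ∧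
      (cm a l).2.1 ≤ (cm a l).1.1 ∧ (cm a l).2.2 ≤ (cm a l).1.2
  | [], a, ha, _ => by simp [cm]; omega
  | x :: xs, a, ha, hl => by
    have hx : 1 ≤ x := hl x (by simp)
    have ih := cm_pos xs x hx (fun y hy => hl y (by simp [hy]))
    obtain ⟨h1, h2, h3, h4, h5, h6⟩ := ih
    simp only [cm]
    refine ⟨?_, ?_, h1, le_trans (by norm_num) h2, ?_, ?_⟩ <;> nlinarith

lemma cm_q (l : List ℤ) (a : ℤ) (hl : ∀ y ∈ l, 1 ≤ y) :
    1 ≤ (cm a l).2.1 ∧ 0 ≤ (cm a l).2.2 := by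
  cases l with
  | nil => simp [cm]
  | cons x xs =>
    have hx : 1 ≤ x := hl x (by simp)
    have ih := cm_pos xs x hx (fun y hy => hl y (by simp [hy]))
    simp only [cm]
    exact ⟨ih.1, le_trans (by norm_num) ih.2.1⟩

lemma cm_strict : ∀ (l : List ℤ) (a : ℤ), 1 ≤ a → (∀ y ∈ l, 1 ≤ y) →
    (l ≠ [] ∨ 2 ≤ a) → (cm a l).2.1 + 1 ≤ (cm a l).1.1
  | [], a, _, _, h => by
    rcases h with h | h
    · simp at h
    · simp [cm]; omega
  | x :: xs, a, ha, hl, _ => by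
    have hx : 1 ≤ x := hl x (by simp)
    have ih := cm_pos xs x hx (fun y hy => hl y (by simp [hy]))
    obtain ⟨h1, h2, h3, h4, h5, h6⟩ := ih
    simp only [cm]
    nlinarith

lemma cm_coprime : ∀ (l : List ℤ) (a : ℤ), Int.gcd (cm a l).1.1 (cm a l).2.1 = 1
  | [], a => by simp [cm]
  | x :: xs, a => by
    have ih := cm_coprime xs x
    simp only [cm]
    rw [← Int.isCoprime_iff_gcd_eq_one] at ih ⊢
    have : a * (cm x xs).1.1 + (cm x xs).2.1 = (cm x xs).2.1 + (cm x xs).1.1 * a := by ring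
    rw [this]
    exact (ih.symm).add_mul_left_left a

lemma cm_det : ∀ (l : List ℤ) (a : ℤ),
    (cm a l).1.1 * (cm a l).2.2 - (cm a l).1.2 * (cm a l).2.1 = (-1) ^ (l.length + 1)
  | [], a => by simp [cm]
  | x :: xs, a => by
    have ih := cm_det xs x
    simp only [cm, List.length_cons, pow_succ]
    linear_combination (-1 : ℤ) * ih

lemma cfVal_eq : ∀ (l : List ℤ) (a : ℤ), (∀ y ∈ l, 1 ≤ y) →
    cfVal a l = ((cm a l).1.1 : ℝ) / ((cm a l).2.1 : ℝ)
  | [], a, _ => by simp [cfVal, cm]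
  | x :: xs, a, hl => by
    have hx : 1 ≤ x := hl x (by simp)
    have hpos := cm_pos xs x hx (fun y hy => hl y (by simp [hy]))
    have ih := cfVal_eq xs x (fun y hy => hl y (by simp [hy]))
    have hp : (0 : ℝ) < ((cm x xs).1.1 : ℝ) := by exact_mod_cast hpos.1.trans_lt' (by norm_num)
    have hq : (0 : ℝ) < ((cm x xs).2.1 : ℝ) := by exact_mod_cast hpos.2.2.1.trans_lt' (by norm_num)
    simp only [cfVal, cm, ih]
    push_cast
    field_simp

lemma one_le_cfVal (l : List ℤ) (a : ℤ) (ha : 1 ≤ a) (hl : ∀ y ∈ l, 1 ≤ y) :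
    1 ≤ cfVal a l := by
  rw [cfVal_eq l a hl]
  have h := cm_pos l a ha hl
  have hq : (0 : ℝ) < ((cm a l).2.1 : ℝ) := by exact_mod_cast h.2.2.1.trans_lt' (by norm_num)
  rw [le_div_iff₀ hq, one_mul]
  exact_mod_cast h.2.2.2.2.1

lemma cfVal_mobius : ∀ (L : List ℤ) (a : ℤ), (∀ y ∈ L, 1 ≤ y) →
    ∀ (c : ℤ) (M : List ℤ), 1 ≤ c → (∀ y ∈ M, 1 ≤ y) →
    cfVal a (L ++ c :: M) =
      (((cm a L).1.1 : ℝ) * cfVal c M + ((cm a L).1.2 : ℝ)) /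
        (((cm a L).2.1 : ℝ) * cfVal c M + ((cm a L).2.2 : ℝ))
  | [], a, _, c, M, hc, hM => by
    have hs : 1 ≤ cfVal c M := one_le_cfVal M c hc hM
    simp only [List.nil_append, cfVal, cm]
    push_cast
    field_simp
    ring
  | x :: xs, a, hL, c, M, hc, hM => by
    have hx : 1 ≤ x := hL x (by simp)
    have ih := cfVal_mobius xs x (fun y hy => hL y (by simp [hy])) c M hc hM
    have hs : 1 ≤ cfVal c M := one_le_cfVal M c hc hM
    have hpos := cm_pos xs x hx (fun y hy => hL y (by simp [hy]))
    have hp1 : (1 : ℝ) ≤ ((cm x xs).1.1 : ℝ) := by exact_mod_cast hpos.1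
    have hp2 : (1 : ℝ) ≤ ((cm x xs).1.2 : ℝ) := by exact_mod_cast hpos.2.1
    have hq1 : (1 : ℝ) ≤ ((cm x xs).2.1 : ℝ) := by exact_mod_cast hpos.2.2.1
    have hq2 : (0 : ℝ) ≤ ((cm x xs).2.2 : ℝ) := by exact_mod_cast hpos.2.2.2.1
    have hden : (0:ℝ) < ((cm x xs).1.1 : ℝ) * cfVal c M + ((cm x xs).1.2 : ℝ) := by nlinarith
    have hden2 : (0:ℝ) < ((cm x xs).2.1 : ℝ) * cfVal c M + ((cm x xs).2.2 : ℝ) := by nlinarith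
    have : cfVal a (x :: xs ++ c :: M) = (a : ℝ) + 1 / cfVal x (xs ++ c :: M) := rfl
    rw [this, ih]
    simp only [cm]
    push_cast
    rw [one_div_div]
    field_simp
    ring

lemma cm_append_singleton : ∀ (L : List ℤ) (a x : ℤ),
    cm a (L ++ [x]) = ((x * (cm a L).1.1 + (cm a L).1.2, (cm a L).1.1),
      (x * (cm a L).2.1 + (cm a L).2.2, (cm a L).2.1))
  | [], a, x => by simp [cm, Prod.ext_iff, mul_comm]
  | y :: ys, a, x => by
    have ih := cm_append_singleton ys y x
    simp only [List.cons_append, cm, List.append_eq, ih, Prod.mk.injEq]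
    and_intros <;> first | trivial | ring

set_option maxHeartbeats 2000000 in
/-- Case 2(b)iA in the proof of the refined Legendre theorem: if
`p/q = [a₀; …, a_{n-1}, b_n, …, b_{n+m}]` is irreducible, `n ≥ 1`, `m ≥ 1`, with positive
partial quotients, `b_{n+m} ≥ 2`, and `b_n < a_n`, then `|α - p/q| ≥ 3/(2q²)`. -/
theorem case_2biA (α : ℝ) (n m : ℕ) (hn : 1 ≤ n) (hm : 1 ≤ m) (a : ℕ → ℤ)
    (ha : ∀ k, k ≤ n → ∃ ip : IntFractPair ℝ, IntFractPair.stream α k = some ip ∧ ip.b = a k)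
    (b : ℕ → ℤ) (hb : ∀ k, n ≤ k → k ≤ n + m → 1 ≤ b k) (hblast : 2 ≤ b (n + m))
    (hbn : b n < a n)
    (p q : ℤ) (hq : 1 ≤ q) (hcop : Int.gcd p q = 1)
    (hpq : (p : ℝ) / q =
      cfVal (a 0) (List.map a (List.range' 1 (n - 1)) ++ List.map b (List.range' n (m + 1)))) :
    3 / (2 * (q : ℝ) ^ 2) ≤ |α - (p : ℝ) / q| := by
  obtain ⟨n', rfl⟩ : ∃ k, n = k + 1 := ⟨n - 1, (Nat.succ_pred_eq_of_pos hn).symm⟩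
  obtain ⟨m', rfl⟩ : ∃ k, m = k + 1 := ⟨m - 1, (Nat.succ_pred_eq_of_pos hm).symm⟩
  -- the contsAux of α agree with the continuants of the list of partial quotients a
  have key : ∀ k, k ≤ n' →
      (GenContFract.of α).contsAux (k + 1) = ⟨((cm (a 0) ((List.range' 1 k).map a)).1.1 : ℝ),
        ((cm (a 0) ((List.range' 1 k).map a)).2.1 : ℝ)⟩ ∧
      (GenContFract.of α).contsAux k = ⟨((cm (a 0) ((List.range' 1 k).map a)).1.2 : ℝ),
        ((cm (a 0) ((List.range' 1 k).map a)).2.2 : ℝ)⟩ := by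
    intro k
    induction k with
    | zero =>
      intro _
      obtain ⟨ip, hip, hipb⟩ := ha 0 (by omega)
      rw [IntFractPair.stream_zero] at hip
      injection hip with hip
      constructor
      · rw [first_contAux_eq_h_one, of_h_eq_floor]
        have : ⌊α⌋ = a 0 := by rw [← hipb, ← hip]; rfl
        simp [cm, this]
      · rw [zeroth_contAux_eq_one_zero]; simp [cm]
    | succ k ih =>
      intro hk
      obtain ⟨ihk1, ihk2⟩ := ih (by omega)
      obtain ⟨ip, hip, hipb⟩ := ha (k + 1) (by omega)
      have hs : (GenContFract.of α).s.get? k = some ⟨1, ((a (k + 1) : ℤ) : ℝ)⟩ := by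
        have := get?_of_eq_some_of_succ_get?_intFractPair_stream hip
        rwa [hipb] at this
      have hrec := contsAux_recurrence hs ihk2 ihk1
      have hlist : List.range' 1 (k + 1) = List.range' 1 k ++ [1 + k] :=
        List.range'_1_concat
      constructor
      · rw [show k + 1 + 1 = k + 2 from rfl, hrec, hlist, List.map_append, List.map_cons,
          List.map_nil, cm_append_singleton, show 1 + k = k + 1 from by omega]
        simp only []
        congr 1 <;> push_cast <;> ring
      · rw [hlist, List.map_append, List.map_cons, List.map_nil, cm_append_singleton,
          show 1 + k = k + 1 from by omega]
        exact ihk1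
  -- positivity of the partial quotients a 1, ..., a n'
  have ha_pos : ∀ y ∈ (List.range' 1 n').map a, 1 ≤ y := by
    intro y hy
    simp only [List.mem_map, List.mem_range'_1] at hy
    obtain ⟨k, ⟨hk1, hk2⟩, rfl⟩ := hy
    obtain ⟨k', rfl⟩ : ∃ j, k = j + 1 := ⟨k - 1, (Nat.succ_pred_eq_of_pos hk1).symm⟩
    obtain ⟨ip, hip, hipb⟩ := ha (k' + 1) (by omega)
    rw [← hipb]
    exact IntFractPair.one_le_succ_nth_stream_b hip
  rcases hP : cm (a 0) ((List.range' 1 n').map a) with ⟨⟨P11, P12⟩, P21, P22⟩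
  obtain ⟨cA1, cA0⟩ := key n' le_rfl
  rw [hP] at cA1 cA0
  have hQp := cm_q ((List.range' 1 n').map a) (a 0) ha_pos
  rw [hP] at hQp
  dsimp only at hQp
  obtain ⟨hP21, hP22⟩ := hQp
  -- α = (t*P11 + P12)/(t*P21 + P22) where t = 1/fr, a n ≤ t
  obtain ⟨ipn, hipn, hipnb⟩ := ha (n' + 1) le_rfl
  obtain ⟨ifp, hifp, hfrne, hofeq⟩ := IntFractPair.succ_nth_stream_eq_some_iff.1 hipn
  have hfrpos : 0 < ifp.fr := (IntFractPair.nth_stream_fr_nonneg hifp).lt_of_ne' hfrne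
  set t : ℝ := ifp.fr⁻¹ with htdef
  have hfloor : ⌊t⌋ = a (n' + 1) := by
    have h1 : (IntFractPair.of ifp.fr⁻¹).b = a (n' + 1) := by rw [hofeq]; exact hipnb
    simpa [IntFractPair.of] using h1
  have htlb : ((a (n' + 1) : ℤ) : ℝ) ≤ t := by rw [← hfloor]; exact Int.floor_le t
  have hα : α = (t * P11 + P12) / (t * P21 + P22) := by
    have hcev := compExactValue_correctness_of_stream_eq_some hifp
    rw [GenContFract.compExactValue, if_neg hfrne] at hcev
    rw [hcev, cA1, cA0]
    simp only [nextConts, nextNum, nextDen, one_mul, ← htdef]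
  -- the b-side continued fraction
  have hbn1 : 1 ≤ b (n' + 1) := hb _ le_rfl (by omega)
  have hbn2 : 1 ≤ b (n' + 2) := hb _ (by omega) (by omega)
  have hM2pos : ∀ z ∈ (List.range' (n' + 3) m').map b, 1 ≤ z := by
    intro z hz
    simp only [List.mem_map, List.mem_range'_1] at hz
    obtain ⟨k, ⟨hk1, hk2⟩, rfl⟩ := hz
    exact hb k (by omega) (by omega)
  rcases hC : cm (b (n' + 2)) ((List.range' (n' + 3) m').map b) with ⟨⟨x, x'⟩, y, y'⟩
  have hCpos := cm_pos _ _ hbn2 hM2pos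
  rw [hC] at hCpos
  dsimp only at hCpos
  have hor : ((List.range' (n' + 3) m').map b ≠ [] ∨ 2 ≤ b (n' + 2)) := by
    rcases Nat.eq_zero_or_pos m' with h0 | h0
    · right
      subst h0
      have he : n' + 1 + (0 + 1) = n' + 2 := by omega
      rwa [he] at hblast
    · left
      obtain ⟨m'', rfl⟩ : ∃ j, m' = j + 1 := ⟨m' - 1, (Nat.succ_pred_eq_of_pos h0).symm⟩
      simp [List.range'_succ]
  have hCstrict := cm_strict _ _ hbn2 hM2pos hor
  rw [hC] at hCstrict
  dsimp only at hCstrict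
  -- y + 1 ≤ x, 1 ≤ y, so 2 ≤ x
  have hy1 : 1 ≤ y := hCpos.2.2.1
  have hx2 : 2 ≤ x := by omega
  -- the full b-list
  set Mβ : List ℤ := b (n' + 2) :: (List.range' (n' + 3) m').map b with hMβ
  have hMβpos : ∀ z ∈ Mβ, 1 ≤ z := by
    intro z hz
    rw [hMβ, List.mem_cons] at hz
    rcases hz with rfl | hz
    · exact hbn2
    · exact hM2pos z hz
  have hlistM : (List.range' (n' + 1) (m' + 1 + 1)).map b = b (n' + 1) :: Mβ := by
    rw [List.range'_succ, List.range'_succ, List.map_cons, List.map_cons, hMβ]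
  have hB : cm (b (n' + 1)) Mβ = ((b (n' + 1) * x + y, b (n' + 1) * x' + y'), (x, x')) := by
    rw [hMβ]; simp only [cm, hC]
  have hBcop := cm_coprime Mβ (b (n' + 1))
  rw [hB] at hBcop
  dsimp only at hBcop
  have hβval : cfVal (b (n' + 1)) Mβ = ((b (n' + 1) * x + y : ℤ) : ℝ) / ((x : ℤ) : ℝ) := by
    rw [cfVal_eq Mβ _ hMβpos, hB]
  have hβ1 : (1 : ℝ) ≤ cfVal (b (n' + 1)) Mβ := one_le_cfVal Mβ _ hbn1 hMβpos
  -- rewrite hpq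
  have hpq2 : (p : ℝ) / q = ((P11 : ℝ) * cfVal (b (n' + 1)) Mβ + P12) /
      ((P21 : ℝ) * cfVal (b (n' + 1)) Mβ + P22) := by
    rw [hpq, show n' + 1 - 1 = n' from rfl, hlistM,
      cfVal_mobius _ _ ha_pos _ _ hbn1 hMβpos, hP]
  -- basic real facts
  have hq0 : (0 : ℝ) < (q : ℝ) := by exact_mod_cast (by omega : (0:ℤ) < q)
  have hx0 : (0 : ℝ) < (x : ℝ) := by exact_mod_cast (by omega : (0:ℤ) < x)
  have hP21R : (1 : ℝ) ≤ (P21 : ℝ) := by exact_mod_cast hP21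
  have hP22R : (0 : ℝ) ≤ (P22 : ℝ) := by exact_mod_cast hP22
  have hxR : (2 : ℝ) ≤ (x : ℝ) := by exact_mod_cast hx2
  have hyR : (1 : ℝ) ≤ (y : ℝ) := by exact_mod_cast hy1
  have hxyR : (y : ℝ) + 1 ≤ (x : ℝ) := by exact_mod_cast hCstrict
  have hbnR : (1 : ℝ) ≤ (b (n' + 1) : ℝ) := by exact_mod_cast hbn1
  have ht0 : (0 : ℝ) < t := by rw [htdef]; exact inv_pos.mpr hfrpos
  have htR : (b (n' + 1) : ℝ) + 1 ≤ t := by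
    have h1 : b (n' + 1) + 1 ≤ a (n' + 1) := by omega
    have h2 : ((b (n' + 1) : ℤ) : ℝ) + 1 ≤ ((a (n' + 1) : ℤ) : ℝ) := by exact_mod_cast h1
    linarith [htlb]
  -- determinant
  have hdet := cm_det ((List.range' 1 n').map a) (a 0)
  rw [hP] at hdet
  dsimp only at hdet
  set ε : ℤ := (-1) ^ (((List.range' 1 n').map a).length + 1) with hεdef
  have hε : ε = 1 ∨ ε = -1 := by
    rcases Nat.even_or_odd (((List.range' 1 n').map a).length + 1) with h | h
    · left; rw [hεdef]; exact h.neg_one_pow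
    · right; rw [hεdef]; exact h.neg_one_pow
  have hε2 : ε * ε = 1 := by rcases hε with h | h <;> rw [h] <;> norm_num
  -- coprimality of the mediant numerator and denominator
  have hABcop : IsCoprime (P11 * (b (n' + 1) * x + y) + P12 * x)
      (P21 * (b (n' + 1) * x + y) + P22 * x) := by
    obtain ⟨k, l, hkl⟩ := Int.isCoprime_iff_gcd_eq_one.mpr hBcop
    exact ⟨k * ε * P22 - l * ε * P21, l * ε * P11 - k * ε * P12,
      by linear_combination (k * ε * (b (n' + 1) * x + y) + l * ε * x) * hdet
        + (k * (b (n' + 1) * x + y) + l * x) * hε2 + hkl⟩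
  -- identify q with the mediant denominator
  have hu3 : (3 : ℤ) ≤ b (n' + 1) * x + y := by nlinarith
  have hBqZ : (0 : ℤ) < P21 * (b (n' + 1) * x + y) + P22 * x := by
    nlinarith [mul_nonneg hP22 (by omega : (0:ℤ) ≤ x),
      mul_pos (by omega : (0:ℤ) < P21) (by omega : (0:ℤ) < b (n' + 1) * x + y)]
  have hden2 : (0 : ℝ) < (P21 : ℝ) * cfVal (b (n' + 1)) Mβ + P22 := by nlinarith [hβ1]
  have hxne : ((x : ℤ) : ℝ) ≠ 0 := by exact_mod_cast hx0.ne'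
  have hux : cfVal (b (n' + 1)) Mβ * ((x : ℤ) : ℝ) = ((b (n' + 1) : ℝ) * x + y) := by
    rw [hβval, div_mul_cancel₀ _ hxne]
    push_cast
    ring
  have hcrossR : (p : ℝ) * ((P21 : ℝ) * ((b (n' + 1) : ℝ) * x + y) + P22 * x)
      = ((P11 : ℝ) * ((b (n' + 1) : ℝ) * x + y) + P12 * x) * q := by
    have h1 := (div_eq_div_iff hq0.ne' hden2.ne').mp hpq2
    linear_combination ((x : ℤ) : ℝ) * h1 + ((q : ℝ) * P11 - (p : ℝ) * P21) * hux
  have hcrossZ : p * (P21 * (b (n' + 1) * x + y) + P22 * x)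
      = (P11 * (b (n' + 1) * x + y) + P12 * x) * q := by
    exact_mod_cast hcrossR
  have hqBq : q = P21 * (b (n' + 1) * x + y) + P22 * x := by
    have hpqc : IsCoprime (q : ℤ) p := (Int.isCoprime_iff_gcd_eq_one.mpr hcop).symm
    have h1 : q ∣ p * (P21 * (b (n' + 1) * x + y) + P22 * x) :=
      ⟨P11 * (b (n' + 1) * x + y) + P12 * x, by linear_combination hcrossZ⟩
    have hqd : q ∣ P21 * (b (n' + 1) * x + y) + P22 * x := hpqc.dvd_of_dvd_mul_left h1
    have h2 : (P21 * (b (n' + 1) * x + y) + P22 * x) ∣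
        (P11 * (b (n' + 1) * x + y) + P12 * x) * q :=
      ⟨p, by linear_combination - hcrossZ⟩
    have hBd : (P21 * (b (n' + 1) * x + y) + P22 * x) ∣ q :=
      hABcop.symm.dvd_of_dvd_mul_left h2
    exact Int.dvd_antisymm (by omega) hBqZ.le hqd hBd
  have hqR : (q : ℝ) = (P21 : ℝ) * ((b (n' + 1) : ℝ) * x + y) + P22 * x := by
    rw [hqBq]; push_cast; ring
  have hpA : (p : ℝ) = (P11 : ℝ) * ((b (n' + 1) : ℝ) * x + y) + P12 * x := by
    have h1 : p * q = (P11 * (b (n' + 1) * x + y) + P12 * x) * q := by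
      rw [hqBq] at hcrossZ ⊢; exact hcrossZ
    have h2 : p = P11 * (b (n' + 1) * x + y) + P12 * x := by
      have hqne : q ≠ 0 := by omega
      exact mul_right_cancel₀ hqne h1
    rw [h2]; push_cast; ring
  -- the difference formula
  have hdetR : (P11 : ℝ) * P22 - (P12 : ℝ) * P21 = (ε : ℝ) := by
    rw [← hdet]; push_cast; ring
  have hd1 : (0 : ℝ) < t * P21 + P22 := by nlinarith
  have hsub : α - (p : ℝ) / q = (ε : ℝ) * (t * x - ((b (n' + 1) : ℝ) * x + y))
      / ((t * P21 + P22) * q) := by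
    rw [hα, hpA, div_sub_div _ _ hd1.ne' hq0.ne']
    congr 1
    linear_combination (t * (P11 : ℝ) + P12) * hqR
      + (t * (x : ℝ) - ((b (n' + 1) : ℝ) * x + y)) * hdetR
  have hnum0 : (0 : ℝ) < t * x - ((b (n' + 1) : ℝ) * x + y) := by nlinarith
  have habs : |α - (p : ℝ) / q| = (t * x - ((b (n' + 1) : ℝ) * x + y))
      / ((t * P21 + P22) * q) := by
    rw [hsub]
    rcases hε with h | h
    · rw [h]
      push_cast
      rw [one_mul, abs_of_pos (div_pos hnum0 (mul_pos hd1 hq0))]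
    · rw [h]
      push_cast
      rw [neg_one_mul, neg_div, abs_neg, abs_of_pos (div_pos hnum0 (mul_pos hd1 hq0))]
  -- the final estimate
  rw [habs, div_le_div_iff₀ (by positivity) (mul_pos hd1 hq0)]
  have hu3R : (3 : ℝ) ≤ (b (n' + 1) : ℝ) * x + y := by exact_mod_cast hu3
  have hq3 : 3 * (P21 : ℝ) ≤ (q : ℝ) := by
    nlinarith [hqR, mul_nonneg (by linarith : (0:ℝ) ≤ (P21 : ℝ))
      (by linarith : (0:ℝ) ≤ (b (n' + 1) : ℝ) * x + y - 3),
      mul_nonneg hP22R (by linarith : (0:ℝ) ≤ (x : ℝ))]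
  have e1 : (0 : ℝ) ≤ 2 * q * x - 3 * P21 := by nlinarith
  have e2 : (0 : ℝ) ≤ t - ((b (n' + 1) : ℝ) + 1) := by linarith
  have e3 : (0 : ℝ) ≤ (t - ((b (n' + 1) : ℝ) + 1)) * (2 * q * x - 3 * P21) :=
    mul_nonneg e2 e1
  have core : 3 * (t * P21 + P22) ≤ (t * x - ((b (n' + 1) : ℝ) * x + y)) * (2 * q) := by
    nlinarith [e3, mul_nonneg hq0.le (by linarith : (0:ℝ) ≤ (x : ℝ) - y - 1),
      mul_nonneg (mul_nonneg (by linarith : (0:ℝ) ≤ (P21:ℝ)) (by linarith : (0:ℝ) ≤ (b (n'+1):ℝ))) (by linarith : (0:ℝ) ≤ (x:ℝ) - 2),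
      mul_nonneg (by linarith : (0:ℝ) ≤ (P21:ℝ)) (by linarith : (0:ℝ) ≤ (y:ℝ) - 1),
      mul_nonneg hP22R (by linarith : (0:ℝ) ≤ (x:ℝ) - 2),
      mul_nonneg (by linarith : (0:ℝ) ≤ (P21:ℝ)) (by linarith : (0:ℝ) ≤ (b (n'+1):ℝ) - 1)]
  nlinarith [mul_le_mul_of_nonneg_right core hq0.le]
end

section
/- Let α = [a₀; a₁, a₂, …] be a real number with convergents pₖ/qₖ, let n ≥ 1, and let p/q = [a₀; a₁, …, a_{n−1}, b_n] be an irreducible fraction where b_n is a positive integer with b_n ≥ 2. If b_n < a_n, then |α − p/q| ≥ 2/(3q²). -/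
open GenContFract

/-! With `x ≥ aₙ` the `n`-th complete quotient of `α`, we have
`α = (x pₙ₋₁ + pₙ₋₂) / (x qₙ₋₁ + qₙ₋₂)` and `p/q = (b pₙ₋₁ + pₙ₋₂) / (b qₙ₋₁ + qₙ₋₂)`, `b = bₙ`.
Since `pₙ₋₁ qₙ₋₂ - pₙ₋₂ qₙ₋₁ = ±1`, the second fraction is in lowest terms and
`|α - p/q| = (x - b) / ((x qₙ₋₁ + qₙ₋₂) q)`. Now `x - b ≥ 1` and `q ≥ 2 qₙ₋₁` (as `b ≥ 2`) give
`2 (x qₙ₋₁ + qₙ₋₂) ≤ 3 (x - b) q`, which is the claim. The continuants are handled as entries of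
products of the matrices `!![aᵢ, 1; 1, 0]`. -/

/-- For `l = [a₀, …, aₖ]` the columns are `(pₖ, qₖ)` and `(pₖ₋₁, qₖ₋₁)`. -/
def continuantMatrix (l : List ℤ) : Matrix (Fin 2) (Fin 2) ℤ :=
  (l.map fun x => !![x, 1; 1, 0]).prod

@[simp]
lemma continuantMatrix_nil : continuantMatrix [] = 1 := rfl

lemma continuantMatrix_cons (x : ℤ) (l : List ℤ) :
    continuantMatrix (x :: l) = !![x, 1; 1, 0] * continuantMatrix l := rfl

lemma continuantMatrix_append (l l' : List ℤ) :
    continuantMatrix (l ++ l') = continuantMatrix l * continuantMatrix l' := by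
  simp [continuantMatrix]

@[simp]
lemma continuantMatrix_cons_apply_zero (x : ℤ) (l : List ℤ) (j : Fin 2) :
    continuantMatrix (x :: l) 0 j = x * continuantMatrix l 0 j + continuantMatrix l 1 j := by
  simp [continuantMatrix_cons, Matrix.mul_apply, Fin.sum_univ_two]

@[simp]
lemma continuantMatrix_cons_apply_one (x : ℤ) (l : List ℤ) (j : Fin 2) :
    continuantMatrix (x :: l) 1 j = continuantMatrix l 0 j := by
  simp [continuantMatrix_cons, Matrix.mul_apply, Fin.sum_univ_two]

@[simp]
lemma continuantMatrix_append_singleton_apply_zero (l : List ℤ) (y : ℤ) (i : Fin 2) :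
    continuantMatrix (l ++ [y]) i 0 = y * continuantMatrix l i 0 + continuantMatrix l i 1 := by
  simp [continuantMatrix_append, continuantMatrix_cons, Matrix.mul_apply, Fin.sum_univ_two,
    mul_comm]

@[simp]
lemma continuantMatrix_append_singleton_apply_one (l : List ℤ) (y : ℤ) (i : Fin 2) :
    continuantMatrix (l ++ [y]) i 1 = continuantMatrix l i 0 := by
  simp [continuantMatrix_append, continuantMatrix_cons, Matrix.mul_apply, Fin.sum_univ_two]

lemma det_continuantMatrix (l : List ℤ) : (continuantMatrix l).det = (-1) ^ l.length := by
  induction l with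
  | nil => simp
  | cons x l ih =>
    rw [continuantMatrix_cons, Matrix.det_mul, ih, Matrix.det_fin_two_of, List.length_cons,
      pow_succ']
    ring

lemma abs_det_continuantMatrix (l : List ℤ) : |(continuantMatrix l).det| = 1 := by
  rw [det_continuantMatrix, abs_pow, abs_neg, abs_one, one_pow]

lemma isCoprime_continuantMatrix (l : List ℤ) :
    IsCoprime (continuantMatrix l 0 0) (continuantMatrix l 1 0) := by
  have hdet := det_continuantMatrix l
  rw [Matrix.det_fin_two] at hdet
  have hsq : ((-1 : ℤ) ^ l.length) ^ 2 = 1 := by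
    rw [← pow_mul, mul_comm, pow_mul, neg_one_sq, one_pow]
  exact ⟨(-1) ^ l.length * continuantMatrix l 1 1, -((-1) ^ l.length * continuantMatrix l 0 1),
    by linear_combination (-1) ^ l.length * hdet + hsq⟩

lemma one_le_continuantMatrix_zero_zero {l : List ℤ} (hl : ∀ x ∈ l, 1 ≤ x) :
    1 ≤ continuantMatrix l 0 0 := by
  suffices 1 ≤ continuantMatrix l 0 0 ∧ 0 ≤ continuantMatrix l 1 0 from this.1
  induction l with
  | nil => simp
  | cons x l ih =>
    obtain ⟨h00, h10⟩ := ih fun y hy => hl y (List.mem_cons_of_mem x hy)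
    have hx : 1 ≤ x := hl x List.mem_cons_self
    simp only [continuantMatrix_cons_apply_zero, continuantMatrix_cons_apply_one]
    constructor <;> nlinarith

lemma cfVal_eq_continuantMatrix (x : ℤ) {l : List ℤ} (hl : ∀ y ∈ l, 1 ≤ y) :
    cfVal x l = continuantMatrix (x :: l) 0 0 / continuantMatrix (x :: l) 1 0 := by
  induction l generalizing x with
  | nil => simp [cfVal]
  | cons y l ih =>
    have hpos : (0 : ℝ) < continuantMatrix (y :: l) 0 0 := by
      exact_mod_cast one_le_continuantMatrix_zero_zero hl
    rw [cfVal, ih y fun z hz => hl z (List.mem_cons_of_mem y hz),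
      continuantMatrix_cons_apply_zero x (y :: l), continuantMatrix_cons_apply_one x (y :: l)]
    push_cast
    field_simp

lemma le_of_div_eq_div_of_isCoprime {F : Type*} [Field F] [CharZero F] {p q p' q' : ℤ}
    (hcop : IsCoprime p' q') (hq : 0 < q) (hq' : 0 < q') (h : (p : F) / q = p' / q') :
    q' ≤ q := by
  rw [div_eq_div_iff (by exact_mod_cast hq.ne') (by exact_mod_cast hq'.ne')] at h
  have hcross : p * q' = p' * q := by exact_mod_cast h
  exact Int.le_of_dvd hq (hcop.symm.dvd_of_dvd_mul_left ⟨p, by linarith⟩)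

lemma mobius_sub_mobius {F : Type*} [Field F] {P Q P' Q' x y : F} (hx : x * Q + Q' ≠ 0)
    (hy : y * Q + Q' ≠ 0) :
    (x * P + P') / (x * Q + Q') - (y * P + P') / (y * Q + Q') =
      (x - y) * (P * Q' - P' * Q) / ((x * Q + Q') * (y * Q + Q')) := by
  rw [div_sub_div _ _ hx hy]
  ring

theorem two_div_three_mul_sq_le_abs_mobius_sub_mobius {F : Type*} [Field F] [LinearOrder F]
    [IsStrictOrderedRing F] {P Q P' Q' b x : F} (hdet : |P * Q' - P' * Q| = 1) (hQ : 0 < Q)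
    (hQ' : 0 ≤ Q') (hb : 2 ≤ b) (hx : b + 1 ≤ x) :
    2 / (3 * (b * Q + Q') ^ 2) ≤
      |(x * P + P') / (x * Q + Q') - (b * P + P') / (b * Q + Q')| := by
  have hq : 0 < b * Q + Q' := by nlinarith
  have hxq : 0 < x * Q + Q' := by nlinarith
  rw [mobius_sub_mobius hxq.ne' hq.ne', abs_div, abs_mul, hdet, mul_one,
    abs_of_pos (by linarith : 0 < x - b), abs_of_pos (mul_pos hxq hq),
    div_le_div_iff₀ (by positivity) (mul_pos hxq hq)]
  -- `x Q + Q' = (b Q + Q') + (x - b) Q` and `2 Q ≤ b Q + Q'`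
  have key : 2 * (x * Q + Q') ≤ 3 * (x - b) * (b * Q + Q') := by
    nlinarith [mul_nonneg (by linarith : (0 : F) ≤ b - 2) hQ.le,
      mul_nonneg (by linarith : (0 : F) ≤ x - b - 1)
        (by nlinarith : (0 : F) ≤ (3 * b - 2) * Q + 3 * Q')]
  nlinarith [mul_le_mul_of_nonneg_right key hq.le]

namespace GenContFract

open GenContFract (of)

variable {F : Type*} [Field F] [LinearOrder F] [FloorRing F] {v : F}

theorem one_le_of_stream_eq_some [IsStrictOrderedRing F] {a : ℕ → ℤ} {n : ℕ}
    (ha : ∀ j ≤ n, ∃ ip : IntFractPair F, IntFractPair.stream v j = some ip ∧ ip.b = a j)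
    {i : ℕ} (hi : 1 ≤ i) (hin : i ≤ n) : 1 ≤ a i := by
  obtain ⟨j, rfl⟩ : ∃ j, i = j + 1 := ⟨i - 1, by omega⟩
  obtain ⟨ip, hs, hab⟩ := ha (j + 1) hin
  exact hab ▸ IntFractPair.one_le_succ_nth_stream_b hs

theorem one_le_contsAux_succ_b [IsStrictOrderedRing F] (n : ℕ) :
    1 ≤ ((of v).contsAux (n + 1)).b := by
  rw [← nth_cont_eq_succ_nth_contAux, ← den_eq_conts_b, ← zeroth_den_eq_one (g := of v)]
  exact monotone_nat_of_le_succ (fun k => of_den_mono (v := v) (n := k)) (Nat.zero_le n)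

-- `ip.b + ip.fr` is the complete quotient `[aₘ₊₁; aₘ₊₂, …]`.
theorem eq_of_stream_succ_eq_some {m : ℕ} {ip : IntFractPair F}
    (h : IntFractPair.stream v (m + 1) = some ip) :
    v = ((ip.b + ip.fr) * ((of v).contsAux (m + 1)).a + ((of v).contsAux m).a) /
      ((ip.b + ip.fr) * ((of v).contsAux (m + 1)).b + ((of v).contsAux m).b) := by
  have hv := compExactValue_correctness_of_stream_eq_some h
  rw [contsAux_recurrence (get?_of_eq_some_of_succ_get?_intFractPair_stream h) rfl rfl] at hv
  rcases eq_or_ne ip.fr 0 with hfr | hfr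
  · simpa [GenContFract.compExactValue, hfr] using hv
  · refine hv.trans ?_
    simp only [GenContFract.compExactValue, hfr, if_false, nextConts, nextNum, nextDen]
    rw [← mul_div_mul_left _ _ hfr]
    congr 1 <;> field_simp <;> ring

theorem contsAux_eq_continuantMatrix {a : ℕ → ℤ} {k : ℕ}
    (ha : ∀ j ≤ k, ∃ ip : IntFractPair F, IntFractPair.stream v j = some ip ∧ ip.b = a j) :
    (of v).contsAux (k + 1) = ⟨(continuantMatrix ((List.range (k + 1)).map a) 0 0 : F),
      continuantMatrix ((List.range (k + 1)).map a) 1 0⟩ ∧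
    (of v).contsAux k = ⟨(continuantMatrix ((List.range (k + 1)).map a) 0 1 : F),
      continuantMatrix ((List.range (k + 1)).map a) 1 1⟩ := by
  induction k with
  | zero =>
    obtain ⟨ip, hs, hb⟩ := ha 0 le_rfl
    obtain rfl : IntFractPair.of v = ip := by simpa [IntFractPair.stream_zero] using hs
    simp [first_contAux_eq_h_one, zeroth_contAux_eq_one_zero, of_h_eq_floor, ← hb,
      IntFractPair.of]
  | succ k ih =>
    obtain ⟨ihs, ih⟩ := ih fun j hj => ha j (by omega)
    obtain ⟨ip, hs, hb⟩ := ha (k + 1) le_rfl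
    rw [contsAux_recurrence (get?_of_eq_some_of_succ_get?_intFractPair_stream hs) ih ihs, ihs,
      List.range_succ (n := k + 1), List.map_append, List.map_singleton, hb]
    simp

theorem two_div_three_mul_sq_le_abs_sub_mediant [IsStrictOrderedRing F] {a : ℕ → ℤ} {m : ℕ}
    (ha : ∀ j ≤ m + 1, ∃ ip : IntFractPair F, IntFractPair.stream v j = some ip ∧ ip.b = a j)
    {b : ℤ} (hb : 2 ≤ b) (hba : b < a (m + 1)) :
    2 / (3 * (continuantMatrix ((List.range (m + 1)).map a ++ [b]) 1 0 : F) ^ 2) ≤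
      |v - continuantMatrix ((List.range (m + 1)).map a ++ [b]) 0 0 /
        continuantMatrix ((List.range (m + 1)).map a ++ [b]) 1 0| := by
  obtain ⟨hconts, hconts'⟩ := contsAux_eq_continuantMatrix (k := m) fun j hj => ha j (by omega)
  set K := continuantMatrix ((List.range (m + 1)).map a)
  have hQ : (1 : F) ≤ K 1 0 := by simpa [hconts] using one_le_contsAux_succ_b (v := v) m
  have hQ' : (0 : F) ≤ K 1 1 := by simpa [hconts'] using zero_le_of_contsAux_b (v := v) (n := m)
  have hdet : |(K 0 0 : F) * K 1 1 - K 0 1 * K 1 0| = 1 := by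
    have := abs_det_continuantMatrix ((List.range (m + 1)).map a)
    rw [Matrix.det_fin_two] at this
    exact_mod_cast this
  obtain ⟨ip, hs, hab⟩ := ha (m + 1) le_rfl
  have hx : (b : F) + 1 ≤ a (m + 1) + ip.fr := by
    have : (b : F) + 1 ≤ a (m + 1) := by exact_mod_cast hba
    linarith [IntFractPair.nth_stream_fr_nonneg hs]
  rw [eq_of_stream_succ_eq_some hs, hconts, hconts', hab,
    continuantMatrix_append_singleton_apply_zero, continuantMatrix_append_singleton_apply_zero]
  push_cast
  exact two_div_three_mul_sq_le_abs_mobius_sub_mobius hdet (by linarith) hQ'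
    (by exact_mod_cast hb) hx

end GenContFract

theorem case_2biB_general (α : ℝ) (n : ℕ) (hn : 1 ≤ n) (a : ℕ → ℤ)
    (ha : ∀ k, k ≤ n → ∃ ip : IntFractPair ℝ, IntFractPair.stream α k = some ip ∧ ip.b = a k)
    (bn : ℤ) (hb : 2 ≤ bn) (hbn : bn < a n)
    (p q : ℤ) (hq : 1 ≤ q)
    (hpq : (p : ℝ) / q = cfVal (a 0) (List.map a (List.range' 1 (n - 1)) ++ [bn])) :
    2 / (3 * (q : ℝ) ^ 2) ≤ |α - (p : ℝ) / q| := by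
  obtain ⟨m, rfl⟩ : ∃ m, n = m + 1 := ⟨n - 1, by omega⟩
  have hlist : (List.range (m + 1)).map a ++ [bn] = a 0 :: ((List.range' 1 m).map a ++ [bn]) := by
    rw [List.range_eq_range', List.range'_succ, List.map_cons, List.cons_append]
  have hpos : ∀ y ∈ (List.range' 1 m).map a ++ [bn], 1 ≤ y := by
    simp only [List.mem_append, List.mem_map, List.mem_range'_1, List.mem_singleton]
    rintro y (⟨i, ⟨hi, him⟩, rfl⟩ | rfl)
    · exact one_le_of_stream_eq_some ha hi (by omega)
    · omega
  set N := continuantMatrix ((List.range (m + 1)).map a ++ [bn])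
  have hval : (p : ℝ) / q = N 0 0 / N 1 0 := by
    rw [hpq, Nat.add_sub_cancel, cfVal_eq_continuantMatrix (a 0) hpos, ← hlist]
  have hN : 0 < N 1 0 := by
    simp only [N, hlist, continuantMatrix_cons_apply_one]
    linarith [one_le_continuantMatrix_zero_zero hpos]
  have hNq : N 1 0 ≤ q :=
    le_of_div_eq_div_of_isCoprime (isCoprime_continuantMatrix _) (by omega) hN hval
  calc 2 / (3 * (q : ℝ) ^ 2) ≤ 2 / (3 * (N 1 0 : ℝ) ^ 2) := by gcongr
    _ ≤ |α - N 0 0 / N 1 0| := two_div_three_mul_sq_le_abs_sub_mediant ha hb hbn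
    _ = |α - p / q| := by rw [hval]

/-- Case 2(b)iB in the proof of the refined Legendre theorem: if
`p/q = [a₀; …, a_{n-1}, b_n]` is irreducible, `n ≥ 1`, `b_n ≥ 2`, and `b_n < a_n`,
then `|α - p/q| ≥ 2/(3q²)`. -/
theorem case_2biB (α : ℝ) (n : ℕ) (hn : 1 ≤ n) (a : ℕ → ℤ)
    (ha : ∀ k, k ≤ n → ∃ ip : IntFractPair ℝ, IntFractPair.stream α k = some ip ∧ ip.b = a k)
    (bn : ℤ) (hb : 2 ≤ bn) (hbn : bn < a n)
    (p q : ℤ) (hq : 1 ≤ q) (hcop : Int.gcd p q = 1)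
    (hpq : (p : ℝ) / q = cfVal (a 0) (List.map a (List.range' 1 (n - 1)) ++ [bn])) :
    2 / (3 * (q : ℝ) ^ 2) ≤ |α - (p : ℝ) / q| :=
  case_2biB_general α n hn a ha bn hb hbn p q hq hpq
end

section
/- Let α = [a₀; a₁, a₂, …] be a real number with convergents pₖ/qₖ, let n ≥ 1 and m ≥ 1, and let p/q = [a₀; a₁, …, a_{n−1}, b_n, b_{n+1}, …, b_{n+m}] be an irreducible fraction with positive integer partial quotients b_n, …, b_{n+m} and b_{n+m} ≥ 2. If b_n > a_n, then |α − p/q| > (1/q²) · 2/(1 − 1/q). -/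
open GenContFract

namespace Case2Aux

/-- Value of a continued fraction with integer entries and a real tail. -/
noncomputable def cfValM : List ℤ → ℝ → ℝ
  | [], x => x
  | c :: l, x => (c : ℝ) + 1 / cfValM l x

@[simp] lemma cfValM_nil (x : ℝ) : cfValM [] x = x := rfl

@[simp] lemma cfValM_cons (c : ℤ) (l : List ℤ) (x : ℝ) :
    cfValM (c :: l) x = (c : ℝ) + 1 / cfValM l x := rfl

lemma cfVal_append (a : ℤ) (L : List ℤ) (y : ℤ) (M : List ℤ) :
    cfVal a (L ++ y :: M) = cfValM (a :: L) (cfVal y M) := by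
  induction L generalizing a with
  | nil => simp [cfVal, cfValM]
  | cons c L ih =>
      have : cfVal a ((c :: L) ++ y :: M) = (a : ℝ) + 1 / cfVal c (L ++ y :: M) := rfl
      rw [this, ih c]
      simp [cfValM]

lemma cfValM_concat (L : List ℤ) (c : ℤ) (x : ℝ) :
    cfValM (L ++ [c]) x = cfValM L ((c : ℝ) + 1 / x) := by
  induction L with
  | nil => simp
  | cons d L ih => simp [ih]

/-- Numerator/denominator pair of a finite continued fraction. -/
def cn : ℤ → List ℤ → ℤ × ℤ
  | c, [] => (c, 1)
  | c, x :: xs => (c * (cn x xs).1 + (cn x xs).2, (cn x xs).1)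

lemma cn_spec (c : ℤ) (l : List ℤ) (hc : 1 ≤ c) (hl : ∀ x ∈ l, 1 ≤ x) :
    1 ≤ (cn c l).2 ∧ (cn c l).2 ≤ (cn c l).1 ∧ IsCoprime (cn c l).1 (cn c l).2 ∧
      cfVal c l = ((cn c l).1 : ℝ) / ((cn c l).2 : ℝ) ∧
      ((2 ≤ c ∨ l ≠ []) → (cn c l).2 < (cn c l).1 ∧ 2 ≤ (cn c l).1 * (cn c l).2) := by
  induction l generalizing c with
  | nil =>
      refine ⟨le_refl 1, hc, isCoprime_one_right, by simp [cfVal, cn], ?_⟩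
      rintro (h | h)
      · simp only [cn]
        omega
      · simp at h
  | cons x xs ih =>
      have hx : 1 ≤ x := hl x (by simp)
      have hxs : ∀ y ∈ xs, 1 ≤ y := fun y hy => hl y (by simp [hy])
      obtain ⟨h1, h2, h3, h4, _⟩ := ih x hx hxs
      set s := (cn x xs).1 with hs
      set t := (cn x xs).2 with ht
      have hcn : cn c (x :: xs) = (c * s + t, s) := rfl
      have hspos : (0 : ℝ) < (s : ℝ) := by exact_mod_cast lt_of_lt_of_le one_pos (le_trans h1 h2)
      have hspos' : (1 : ℤ) ≤ s := le_trans h1 h2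
      constructor
      · rw [hcn]; exact hspos'
      refine ⟨?_, ?_, ?_, ?_⟩
      · rw [hcn]; dsimp only; nlinarith
      · rw [hcn]; dsimp only
        obtain ⟨xx, yy, hxy⟩ := h3.symm
        exact ⟨xx, yy - xx * c, by linear_combination hxy⟩
      · rw [hcn]; dsimp only
        have hcv : cfVal c (x :: xs) = (c : ℝ) + 1 / cfVal x xs := rfl
        have htpos : (0 : ℝ) < (t : ℝ) := by exact_mod_cast h1
        rw [hcv, h4, one_div_div]
        push_cast
        field_simp
        all_goals ring
      · intro _
        rw [hcn]; dsimp only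
        have h2s : 2 ≤ c * s + t := by nlinarith
        have h2m : 2 * 1 ≤ (c * s + t) * s := mul_le_mul h2s hspos' (by omega) (by omega)
        constructor <;> nlinarith

/-- Continuant matrix (from the front) of a list of partial quotients. -/
def cm : List ℤ → ℤ × ℤ × ℤ × ℤ
  | [] => (1, 0, 0, 1)
  | c :: l => (c * (cm l).1 + (cm l).2.2.1, c * (cm l).2.1 + (cm l).2.2.2, (cm l).1, (cm l).2.1)

lemma cm_spec (L : List ℤ) (hL : ∀ x ∈ L, 1 ≤ x) :
    1 ≤ (cm L).1 ∧ 0 ≤ (cm L).2.1 ∧ 0 ≤ (cm L).2.2.1 ∧ 0 ≤ (cm L).2.2.2 ∧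
      1 ≤ (cm L).2.2.1 + (cm L).2.2.2 ∧
      ((cm L).1 * (cm L).2.2.2 - (cm L).2.1 * (cm L).2.2.1 = 1 ∨
        (cm L).1 * (cm L).2.2.2 - (cm L).2.1 * (cm L).2.2.1 = -1) ∧
      ∀ x : ℝ, 1 < x →
        1 < cfValM L x ∧
        cfValM L x = ((cm L).1 * x + (cm L).2.1) / ((cm L).2.2.1 * x + (cm L).2.2.2) := by
  induction L with
  | nil =>
      refine ⟨le_refl 1, le_refl 0, le_refl 0, zero_le_one, by simp [cm], by simp [cm], ?_⟩
      intro x hx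
      simp [cm]
      exact hx
  | cons c l ih =>
      have hc : 1 ≤ c := hL c (by simp)
      have hl : ∀ x ∈ l, 1 ≤ x := fun y hy => hL y (by simp [hy])
      obtain ⟨hA, hB, hC, hD, hCD, hdet, hval⟩ := ih hl
      set A := (cm l).1; set B := (cm l).2.1; set C := (cm l).2.2.1; set D := (cm l).2.2.2
      have hcm : cm (c :: l) = (c * A + C, c * B + D, A, B) := rfl
      rw [hcm]
      dsimp only
      refine ⟨by nlinarith, by nlinarith, by linarith, hB, by linarith, ?_, ?_⟩
      · rcases hdet with h | h
        · right; linear_combination -h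
        · left; linear_combination -h
      · intro x hx
        obtain ⟨hv1, hv2⟩ := hval x hx
        have hAR : (1 : ℝ) ≤ (A : ℝ) := by exact_mod_cast hA
        have hBR : (0 : ℝ) ≤ (B : ℝ) := by exact_mod_cast hB
        have hCR : (0 : ℝ) ≤ (C : ℝ) := by exact_mod_cast hC
        have hDR : (0 : ℝ) ≤ (D : ℝ) := by exact_mod_cast hD
        have hCDR : (1 : ℝ) ≤ (C : ℝ) + (D : ℝ) := by exact_mod_cast hCD
        have hden1 : (0 : ℝ) < (A : ℝ) * x + B := by nlinarith
        have hden2 : (0 : ℝ) < (C : ℝ) * x + D := by nlinarith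
        have hcR : (1 : ℝ) ≤ (c : ℝ) := by exact_mod_cast hc
        have hfrac : (0 : ℝ) < ((C : ℝ) * x + D) / ((A : ℝ) * x + B) := div_pos hden2 hden1
        have hvc : cfValM (c :: l) x = (c : ℝ) + ((C : ℝ) * x + D) / ((A : ℝ) * x + B) := by
          rw [cfValM_cons, hv2, one_div_div]
        constructor
        · rw [hvc]; linarith
        · rw [hvc]
          push_cast
          field_simp
          ring

end Case2Aux

namespace Case2Aux

open GenContFract

lemma stream_succ_facts {α : ℝ} {k : ℕ} {ip : IntFractPair ℝ}
    (h : IntFractPair.stream α (k + 1) = some ip) :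
    ∃ ipp : IntFractPair ℝ, IntFractPair.stream α k = some ipp ∧
      0 < ipp.fr ∧ (ip.b : ℝ) + ip.fr = ipp.fr⁻¹ ∧ 1 < (ip.b : ℝ) + ip.fr ∧ 1 ≤ ip.b := by
  obtain ⟨ipp, hst, hfr, hof⟩ := IntFractPair.succ_nth_stream_eq_some_iff.1 h
  obtain ⟨hfr0, hfr1⟩ := IntFractPair.nth_stream_fr_nonneg_lt_one hst
  have hpos : 0 < ipp.fr := lt_of_le_of_ne hfr0 (Ne.symm hfr)
  have hinv : 1 < ipp.fr⁻¹ := (one_lt_inv₀ hpos).2 hfr1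
  have hsum : (ip.b : ℝ) + ip.fr = ipp.fr⁻¹ := by
    rw [← hof]
    exact Int.floor_add_fract _
  refine ⟨ipp, hst, hpos, hsum, by rw [hsum]; exact hinv, ?_⟩
  rw [← hof]
  exact Int.le_floor.2 (by exact_mod_cast hinv.le)

lemma alpha_cf (α : ℝ) (n : ℕ) (a : ℕ → ℤ)
    (ha : ∀ k, k ≤ n → ∃ ip : IntFractPair ℝ, IntFractPair.stream α k = some ip ∧ ip.b = a k) :
    ∀ k, 1 ≤ k → k ≤ n → ∀ ip : IntFractPair ℝ, IntFractPair.stream α k = some ip →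
      1 < (ip.b : ℝ) + ip.fr ∧
      α = cfValM (a 0 :: List.map a (List.range' 1 (k - 1))) ((ip.b : ℝ) + ip.fr) := by
  intro k
  induction k with
  | zero => omega
  | succ k ihk =>
    intro _ hkn ip hip
    obtain ⟨ipp, hstp, hfrpos, hsum, hgt1, hb1⟩ := stream_succ_facts hip
    have hinv : 1 / ((ip.b : ℝ) + ip.fr) = ipp.fr := by
      rw [hsum, one_div, inv_inv]
    refine ⟨hgt1, ?_⟩
    rcases Nat.eq_zero_or_pos k with rfl | hk
    · have h0 : IntFractPair.stream α 0 = some (IntFractPair.of α) := IntFractPair.stream_zero α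
      rw [h0] at hstp
      have hippof : IntFractPair.of α = ipp := Option.some.inj hstp
      obtain ⟨ip0, hip0, hab0⟩ := ha 0 (Nat.zero_le n)
      rw [h0] at hip0
      have hip0of : IntFractPair.of α = ip0 := Option.some.inj hip0
      have hb0 : ipp.b = a 0 := by rw [← hippof, hip0of]; exact hab0
      have hα : (ipp.b : ℝ) + ipp.fr = α := by
        rw [← hippof]; exact Int.floor_add_fract α
      simp only [Nat.add_sub_cancel, List.range'_zero, List.map_nil]
      rw [cfValM_cons, cfValM_nil, hinv, ← hb0, hα]
    · obtain ⟨hgt1', hαval⟩ := ihk hk (by omega) ipp hstp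
      obtain ⟨ipk, hipk, habk⟩ := ha k (by omega)
      have hipkeq : ipp = ipk := by
        rw [hipk] at hstp; exact (Option.some.inj hstp).symm
      have hbk : ipp.b = a k := by rw [hipkeq]; exact habk
      have hx : (ipp.b : ℝ) + ipp.fr = (a k : ℝ) + 1 / ((ip.b : ℝ) + ip.fr) := by
        rw [hinv, hbk]
      rw [hαval, hx, ← cfValM_concat]
      congr 1
      have h1 : 1 + 1 * (k - 1) = k := by omega
      have hl : List.range' 1 k = List.range' 1 (k - 1) ++ [k] := by
        have h2 := List.range'_concat (step := 1) (s := 1) (n := k - 1)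
        rw [h1, Nat.sub_add_cancel hk] at h2
        exact h2
      simp only [Nat.add_sub_cancel, hl, List.map_append, List.map_cons, List.map_nil]
      rfl

lemma a_pos (α : ℝ) (n : ℕ) (a : ℕ → ℤ)
    (ha : ∀ k, k ≤ n → ∃ ip : IntFractPair ℝ, IntFractPair.stream α k = some ip ∧ ip.b = a k) :
    ∀ k, 1 ≤ k → k ≤ n → 1 ≤ a k := by
  intro k h1 h2
  obtain ⟨ip, hip, hab⟩ := ha k h2
  obtain ⟨k', rfl⟩ : ∃ k', k = k' + 1 := ⟨k - 1, by omega⟩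
  obtain ⟨_, _, _, _, _, hb⟩ := stream_succ_facts hip
  omega

end Case2Aux

set_option maxHeartbeats 1000000 in
/-- Case 2(b)iiA in the proof of the refined Legendre theorem: if
`p/q = [a₀; …, a_{n-1}, b_n, …, b_{n+m}]` is irreducible, `n ≥ 1`, `m ≥ 1`, with positive
partial quotients, `b_{n+m} ≥ 2`, and `b_n > a_n`, then `|α - p/q| > (1/q²)·2/(1 - 1/q)`. -/
theorem case_2biiA (α : ℝ) (n m : ℕ) (hn : 1 ≤ n) (hm : 1 ≤ m) (a : ℕ → ℤ)
    (ha : ∀ k, k ≤ n → ∃ ip : IntFractPair ℝ, IntFractPair.stream α k = some ip ∧ ip.b = a k)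
    (b : ℕ → ℤ) (hb : ∀ k, n ≤ k → k ≤ n + m → 1 ≤ b k) (hblast : 2 ≤ b (n + m))
    (hbn : a n < b n)
    (p q : ℤ) (hq : 1 ≤ q) (hcop : Int.gcd p q = 1)
    (hpq : (p : ℝ) / q =
      cfVal (a 0) (List.map a (List.range' 1 (n - 1)) ++ List.map b (List.range' n (m + 1)))) :
    1 / (q : ℝ) ^ 2 * (2 / (1 - 1 / (q : ℝ))) < |α - (p : ℝ) / q| := by
  classical
  -- lists
  set La : List ℤ := List.map a (List.range' 1 (n - 1)) with hLadef
  set Lb : List ℤ := List.map b (List.range' (n + 1) m) with hLbdef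
  set Lb2 : List ℤ := List.map b (List.range' (n + 2) (m - 1)) with hLb2def
  have hsplit : List.map b (List.range' n (m + 1)) = b n :: Lb := by
    rw [List.range'_succ, List.map_cons]
  have hLbsplit : Lb = b (n + 1) :: Lb2 := by
    rw [hLbdef, hLb2def, show m = (m - 1) + 1 by omega, List.range'_succ, List.map_cons]
    simp [show m - 1 + 1 - 1 = m - 1 by omega]
  -- entry positivity
  have hapos := Case2Aux.a_pos α n a ha
  have hLaent : ∀ x ∈ La, 1 ≤ x := by
    intro x hx
    rw [hLadef] at hx
    simp only [List.mem_map, List.mem_range'_1] at hx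
    obtain ⟨k, ⟨hk1, hk2⟩, rfl⟩ := hx
    exact hapos k hk1 (by omega)
  have hLbent : ∀ x ∈ Lb, 1 ≤ x := by
    intro x hx
    rw [hLbdef] at hx
    simp only [List.mem_map, List.mem_range'_1] at hx
    obtain ⟨k, ⟨hk1, hk2⟩, rfl⟩ := hx
    exact hb k (by omega) (by omega)
  have hLb2ent : ∀ x ∈ Lb2, 1 ≤ x := by
    intro x hx
    exact hLbent x (by rw [hLbsplit]; simp [hx])
  have han1 : 1 ≤ a n := hapos n hn le_rfl
  have hbn2 : 2 ≤ b n := by omega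
  -- inner pair (v, t)
  obtain ⟨hst1, hst2, hstcop, hstval, hststrong⟩ :=
    Case2Aux.cn_spec (b (n + 1)) Lb2 (hb (n + 1) (by omega) (by omega)) hLb2ent
  set v : ℤ := (Case2Aux.cn (b (n + 1)) Lb2).1 with hvdef
  set t : ℤ := (Case2Aux.cn (b (n + 1)) Lb2).2 with htdef
  have hstrong : t < v ∧ 2 ≤ v * t := by
    apply hststrong
    rcases Nat.lt_or_ge m 2 with hm2 | hm2
    · left
      have : n + 1 = n + m := by omega
      rw [this]; exact hblast
    · right
      rw [hLb2def]
      intro hnil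
      apply_fun List.length at hnil
      simp at hnil
      omega
  -- outer pair (u, v)
  have hcnLb : Case2Aux.cn (b n) Lb = (b n * v + t, v) := by
    rw [hLbsplit]; rfl
  obtain ⟨hv1', hvu', hcopuv', hβval', -⟩ :=
    Case2Aux.cn_spec (b n) Lb (by omega) hLbent
  rw [hcnLb] at hv1' hvu' hcopuv' hβval'
  dsimp only at hv1' hvu' hcopuv' hβval'
  set u : ℤ := b n * v + t with hudef
  -- continuant matrix of La
  obtain ⟨hA, hB, hC, hD, hCD, hdet, hmob⟩ := Case2Aux.cm_spec La hLaent
  set A : ℤ := (Case2Aux.cm La).1 with hAdef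
  set B : ℤ := (Case2Aux.cm La).2.1 with hBdef
  set C : ℤ := (Case2Aux.cm La).2.2.1 with hCdef
  set D : ℤ := (Case2Aux.cm La).2.2.2 with hDdef
  obtain ⟨e, he, hdet'⟩ : ∃ e : ℤ, (e = 1 ∨ e = -1) ∧ A * D - B * C = e := by
    rcases hdet with h | h
    exacts [⟨1, Or.inl rfl, h⟩, ⟨-1, Or.inr rfl, h⟩]
  have he2 : e * e = 1 := by rcases he with rfl | rfl <;> norm_num
  -- the complete quotient xα
  obtain ⟨ipn, hstn, habn⟩ := ha n le_rfl
  obtain ⟨hxα1, hαval⟩ := Case2Aux.alpha_cf α n a ha n hn le_rfl ipn hstn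
  set xα : ℝ := (ipn.b : ℝ) + ipn.fr with hxαdef
  obtain ⟨hfrn0, hfrn1⟩ := IntFractPair.nth_stream_fr_nonneg_lt_one hstn
  have hxαlt : xα < (b n : ℝ) := by
    have h1 : xα < (a n : ℝ) + 1 := by
      rw [hxαdef, ← habn]
      linarith only [hfrn1]
    have h2 : (a n : ℝ) + 1 ≤ (b n : ℝ) := by exact_mod_cast hbn
    linarith only [h1, h2]
  -- β
  set xβ : ℝ := cfVal (b n) Lb with hxβdef
  have hβ : xβ = (u : ℝ) / (v : ℝ) := hβval'
  have hvR : (0 : ℝ) < (v : ℝ) := by exact_mod_cast hv1'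
  have hvR0 : (v : ℝ) ≠ 0 := ne_of_gt hvR
  have hu3 : 3 ≤ u := by nlinarith only [hstrong.1, hst1, hbn2, hudef, hv1']
  have hvu : v < u := by nlinarith only [hstrong.1, hst1, hbn2, hudef, hv1']
  have hβ1 : 1 < xβ := by
    rw [hβ, lt_div_iff₀ hvR]
    have hvuR : (v : ℝ) < (u : ℝ) := by exact_mod_cast hvu
    linarith only [hvuR, hvR]
  -- Mobius values
  obtain ⟨-, hα2⟩ := hmob xα hxα1
  obtain ⟨-, hβ2⟩ := hmob xβ hβ1
  -- cast entries
  have hAR : (1 : ℝ) ≤ (A : ℝ) := by exact_mod_cast hA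
  have hBR : (0 : ℝ) ≤ (B : ℝ) := by exact_mod_cast hB
  have hdα : (0 : ℝ) < (A : ℝ) * xα + B := by nlinarith only [hAR, hBR, hxα1]
  have hdβ : (0 : ℝ) < (A : ℝ) * xβ + B := by nlinarith only [hAR, hBR, hβ1]
  -- α and p/q as Mobius images
  have hαe : α = (a 0 : ℝ) + ((C : ℝ) * xα + D) / ((A : ℝ) * xα + B) := by
    rw [hαval, Case2Aux.cfValM_cons, hα2, one_div_div]
  have hpe : (p : ℝ) / q = (a 0 : ℝ) + ((C : ℝ) * xβ + D) / ((A : ℝ) * xβ + B) := by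
    rw [hpq, hsplit, Case2Aux.cfVal_append, Case2Aux.cfValM_cons, ← hxβdef, hβ2, one_div_div]
  -- q = Q
  set Q : ℤ := A * u + B * v with hQdef
  have hu0 : (0 : ℤ) ≤ u := by linarith only [hu3]
  have hQu : u ≤ A * u := by
    have := mul_le_mul_of_nonneg_right hA hu0
    linarith only [this]
  have hBv : 0 ≤ B * v := mul_nonneg hB (by linarith only [hv1'])
  have hQpos : 0 < Q := by rw [hQdef]; linarith only [hQu, hBv, hu3]
  have hQR0 : ((Q : ℤ) : ℝ) ≠ 0 := by exact_mod_cast ne_of_gt hQpos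
  have hqRpos : (0 : ℝ) < (q : ℝ) := by exact_mod_cast lt_of_lt_of_le one_pos hq
  have hqR0 : (q : ℝ) ≠ 0 := ne_of_gt hqRpos
  have hdenv : (A : ℝ) * xβ + B = ((Q : ℤ) : ℝ) / (v : ℝ) := by
    rw [hβ, hQdef]; push_cast; field_simp
  have hnumv : (C : ℝ) * xβ + D = ((C * u + D * v : ℤ) : ℝ) / (v : ℝ) := by
    rw [hβ]; push_cast; field_simp
  have hdivdiv : ∀ x y z : ℝ, z ≠ 0 → y ≠ 0 → (x / z) / (y / z) = x / y := by
    intro x y z hz hy; field_simp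
  set P : ℤ := a 0 * Q + (C * u + D * v) with hPdef
  have hPQ : (p : ℝ) / q = ((P : ℤ) : ℝ) / ((Q : ℤ) : ℝ) := by
    rw [hpe, hnumv, hdenv, hdivdiv _ _ _ hvR0 hQR0, hPdef]
    push_cast
    field_simp
  have hint : p * Q = P * q := by
    rw [div_eq_div_iff hqR0 hQR0] at hPQ
    exact_mod_cast hPQ
  obtain ⟨x0, y0, hx0⟩ := hcopuv'
  have hcpPQ : IsCoprime P Q := by
    refine ⟨e * (y0 * A - x0 * B), e * (x0 * D - y0 * C) - e * (y0 * A - x0 * B) * a 0, ?_⟩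
    rw [hPdef, hQdef, hudef]
    rw [hudef] at hx0
    linear_combination (e * y0 * v + e * x0 * (b n * v + t)) * hdet' +
      (x0 * (b n * v + t) + y0 * v) * he2 + hx0
  have hqQ : q = Q := by
    have hpcop : IsCoprime q p := (Int.isCoprime_iff_gcd_eq_one.2 hcop).symm
    have hd1 : q ∣ Q := hpcop.dvd_of_dvd_mul_left ⟨P, by linear_combination hint⟩
    have hd2 : Q ∣ q := (hcpPQ.symm).dvd_of_dvd_mul_left ⟨p, by linear_combination -hint⟩
    exact Int.dvd_antisymm (by omega) hQpos.le hd1 hd2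
  -- difference formula
  have hdR : (A : ℝ) * (D : ℝ) - (B : ℝ) * (C : ℝ) = (e : ℝ) := by exact_mod_cast hdet'
  have hdiff : α - (p : ℝ) / q =
      (e : ℝ) * (xβ - xα) / (((A : ℝ) * xα + B) * ((A : ℝ) * xβ + B)) := by
    rw [hαe, hpe]
    rw [show ∀ x y z : ℝ, x + y - (x + z) = y - z from fun x y z => by ring]
    rw [div_sub_div _ _ (ne_of_gt hdα) (ne_of_gt hdβ)]
    congr 1
    linear_combination (xβ - xα) * hdR
  have huvR : (u : ℝ) = (b n : ℝ) * v + t := by rw [hudef]; push_cast; ring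
  have htR : (1 : ℝ) ≤ (t : ℝ) := by exact_mod_cast hst1
  have hxαβ : xα < xβ := by
    rw [hβ, lt_div_iff₀ hvR]
    nlinarith only [mul_pos hvR (sub_pos.2 hxαlt), huvR, htR]
  have habs : |α - (p : ℝ) / q| = (xβ - xα) / (((A : ℝ) * xα + B) * ((A : ℝ) * xβ + B)) := by
    rw [hdiff, abs_div, abs_mul]
    rw [abs_of_pos (by linarith only [hxαβ] : (0 : ℝ) < xβ - xα),
      abs_of_pos (mul_pos hdα hdβ)]
    rcases he with rfl | rfl <;> norm_num
  -- final computation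
  have hq3 : 3 ≤ q := by
    rw [hqQ, hQdef]; linarith only [hQu, hBv, hu3]
  have hqR3 : (3 : ℝ) ≤ (q : ℝ) := by exact_mod_cast hq3
  have hq1R : (0 : ℝ) < (q : ℝ) - 1 := by linarith only [hqR3]
  have hLHS : 1 / (q : ℝ) ^ 2 * (2 / (1 - 1 / (q : ℝ))) = 2 / ((q : ℝ) * ((q : ℝ) - 1)) := by
    have h2 : (q : ℝ) - 1 ≠ 0 := ne_of_gt hq1R
    field_simp
  have hdβq : (A : ℝ) * xβ + B = (q : ℝ) / (v : ℝ) := by rw [hdenv, hqQ]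
  have hRHS : (xβ - xα) / (((A : ℝ) * xα + B) * ((A : ℝ) * xβ + B)) =
      ((u : ℝ) - (v : ℝ) * xα) / (((A : ℝ) * xα + B) * (q : ℝ)) := by
    rw [hdβq, hβ]
    rw [div_eq_div_iff (by positivity) (by positivity)]
    field_simp
  rw [habs, hLHS, hRHS]
  -- key integer inequality
  have hqexp : q = (A * b n + B) * v + A * t := by rw [hqQ, hQdef, hudef]; ring
  have hAbnB : 1 ≤ A * b n + B := by
    have h1 : 1 * 1 ≤ A * b n := mul_le_mul hA (by omega) (by omega) (by omega)
    linarith only [h1, hB]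
  have hkeyInt : 2 * (A * b n + B) ≤ t * (q - 1) := by
    have e1 : 2 * (A * b n + B) ≤ (A * b n + B) * (v * t) := by
      have := mul_le_mul_of_nonneg_left hstrong.2 (by linarith only [hAbnB] : (0 : ℤ) ≤ A * b n + B)
      linarith only [this]
    have e2 : 0 ≤ A * t * t - t := by
      have h1 : t * 1 ≤ t * t := mul_le_mul_of_nonneg_left hst1 (by omega)
      have h2 : 1 * (t * t) ≤ A * (t * t) :=
        mul_le_mul_of_nonneg_right hA
          (mul_nonneg (by omega : (0 : ℤ) ≤ t) (by omega : (0 : ℤ) ≤ t))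
      nlinarith only [h1, h2]
    have e3 : t * (q - 1) = (A * b n + B) * (v * t) + (A * t * t - t) := by
      rw [hqexp]; ring
    linarith only [e1, e2, e3]
  -- real chain
  have hk1 : 2 * ((A : ℝ) * xα + B) < 2 * ((A : ℝ) * (b n : ℝ) + B) := by
    have hApos : (0 : ℝ) < (A : ℝ) := by linarith only [hAR]
    have := mul_lt_mul_of_pos_left hxαlt hApos
    linarith only [this]
  have hk2 : 2 * ((A : ℝ) * (b n : ℝ) + B) ≤ (t : ℝ) * ((q : ℝ) - 1) := by
    have hcast : ((2 * (A * b n + B) : ℤ) : ℝ) ≤ ((t * (q - 1) : ℤ) : ℝ) := Int.cast_le.2 hkeyInt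
    push_cast at hcast
    linarith only [hcast]
  have hk3 : (t : ℝ) < (u : ℝ) - (v : ℝ) * xα := by
    nlinarith only [mul_pos hvR (sub_pos.2 hxαlt), huvR]
  have hk4 : (t : ℝ) * ((q : ℝ) - 1) < ((u : ℝ) - (v : ℝ) * xα) * ((q : ℝ) - 1) :=
    mul_lt_mul_of_pos_right hk3 hq1R
  have hmain : 2 * ((A : ℝ) * xα + B) < ((u : ℝ) - (v : ℝ) * xα) * ((q : ℝ) - 1) := by
    linarith only [hk1, hk2, hk4]
  rw [div_lt_div_iff₀ (by positivity) (by positivity)]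
  calc 2 * (((A : ℝ) * xα + B) * (q : ℝ)) = (2 * ((A : ℝ) * xα + B)) * (q : ℝ) := by ring
    _ < (((u : ℝ) - (v : ℝ) * xα) * ((q : ℝ) - 1)) * (q : ℝ) :=
        mul_lt_mul_of_pos_right hmain hqRpos
    _ = ((u : ℝ) - (v : ℝ) * xα) * ((q : ℝ) * ((q : ℝ) - 1)) := by ring
end

section
/- Let A and N be positive integers, let α = Σ_{n=1}^{∞} 1/(2^{2ⁿ−1}·A^{2ⁿ}), let q = 2^{2ᴺ−1}·A^{2ᴺ} and p = q·Σ_{n=1}^{N} 1/(2^{2ⁿ−1}·A^{2ⁿ}). Then 1/(2q²) < |α − p/q| < 1/(q²·(2 − 1/q)). -/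
private lemma aux_value (q : ℝ) (hq1 : 1 ≤ q) :
    2*(1/(2*q))^2 * (1-(1/(2*q)))⁻¹ = 1 / (q ^ 2 * (2 - 1 / q)) := by
  have hq0 : (0:ℝ) < q := by linarith
  have h1 : (1:ℝ) - 1/(2*q) ≠ 0 := by
    have : 1/(2*q) < 1 := by rw [div_lt_one (by linarith)]; linarith
    linarith
  have h3 : 2*q - 1 ≠ 0 := by nlinarith
  have e1 : (1:ℝ) - 1/(2*q) = (2*q-1)/(2*q) := by field_simp
  have e2 : q ^ 2 * (2 - 1/q) = q*(2*q-1) := by field_simp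
  rw [e1, e2, inv_div]
  field_simp

/-- The estimates behind Example 1: for `α = Σ_{n≥1} 1/(2^(2ⁿ-1)·A^(2ⁿ))`,
`q = 2^(2ᴺ-1)·A^(2ᴺ)` and `p = q·(N-th partial sum)`, one has
`1/(2q²) < |α - p/q| < 1/(q²·(2 - 1/q))`. -/
theorem example_one_estimates (A N : ℕ) (hA : 0 < A) (hN : 0 < N) (α : ℝ)
    (hα : α = ∑' n : ℕ, 1 / ((2 : ℝ) ^ (2 ^ (n + 1) - 1) * (A : ℝ) ^ (2 ^ (n + 1))))
    (q : ℕ) (hq : q = 2 ^ (2 ^ N - 1) * A ^ (2 ^ N)) (p : ℝ)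
    (hp : p = (q : ℝ) *
      ∑ n ∈ Finset.range N, 1 / ((2 : ℝ) ^ (2 ^ (n + 1) - 1) * (A : ℝ) ^ (2 ^ (n + 1)))) :
    1 / (2 * (q : ℝ) ^ 2) < |α - p / (q : ℝ)| ∧
      |α - p / (q : ℝ)| < 1 / ((q : ℝ) ^ 2 * (2 - 1 / (q : ℝ))) := by
  have hA1 : (1:ℝ) ≤ (A:ℝ) := by exact_mod_cast hA
  set f : ℕ → ℝ := fun n => 1 / ((2 : ℝ) ^ (2 ^ (n + 1) - 1) * (A : ℝ) ^ (2 ^ (n + 1))) with hfdef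
  set t : ℝ := 2 * (A:ℝ) with ht
  have ht2 : (2:ℝ) ≤ t := by rw [ht]; nlinarith
  have ht0 : (0:ℝ) < t := by linarith
  have hpow : ∀ m : ℕ, 0 < m → (2:ℝ)^(m-1) * (A:ℝ)^m = t^m / 2 := by
    intro m hm
    have hm1 : m - 1 + 1 = m := Nat.succ_pred_eq_of_pos hm
    calc (2:ℝ)^(m-1) * (A:ℝ)^m = (2:ℝ)^(m-1+1) * (A:ℝ)^m / 2 := by rw [pow_succ]; ring
    _ = t^m/2 := by rw [hm1, ht, mul_pow]
  have hfe : ∀ n, f n = 2 / t ^ (2^(n+1)) := by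
    intro n
    have h := hpow (2^(n+1)) (pow_pos (by norm_num) _)
    rw [hfdef]
    simp only
    rw [h, one_div_div]
  have hfpos : ∀ n, 0 < f n := by
    intro n; rw [hfe]; positivity
  -- summability
  have hle : ∀ n, f n ≤ (1/2:ℝ)^n := by
    intro n
    have e0 : n + 1 ≤ 2^(n+1) := (Nat.lt_two_pow_self (n := n+1)).le
    have e1 : (2:ℝ)^(n+1) ≤ t^(2^(n+1)) :=
      calc (2:ℝ)^(n+1) ≤ (2:ℝ)^(2^(n+1)) := pow_le_pow_right₀ (by norm_num) e0
      _ ≤ t^(2^(n+1)) := pow_le_pow_left₀ (by norm_num) ht2 _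
    have e2 : (0:ℝ) < (2:ℝ)^(n+1) := by positivity
    have := div_le_div_of_nonneg_left (by norm_num : (0:ℝ) ≤ 2) e2 e1
    rw [hfe]
    calc 2 / t^(2^(n+1)) ≤ 2 / (2:ℝ)^(n+1) := by
          apply div_le_div_of_nonneg_left (by norm_num) e2 e1
    _ = (1/2:ℝ)^n := by rw [pow_succ, one_div, inv_pow]; field_simp
  have hsum : Summable f :=
    Summable.of_nonneg_of_le (fun n => (hfpos n).le) hle
      (summable_geometric_of_lt_one (by norm_num) (by norm_num))
  -- q facts
  have hq0 : 0 < q := by rw [hq]; positivity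
  have hqR : (0:ℝ) < (q:ℝ) := by exact_mod_cast hq0
  have hq1 : (1:ℝ) ≤ (q:ℝ) := by exact_mod_cast hq0
  have h2q : 2*(q:ℝ) = t^(2^N) := by
    have : (q:ℝ) = (2:ℝ)^(2^N - 1) * (A:ℝ)^(2^N) := by rw [hq]; push_cast; ring
    rw [this, hpow (2^N) (pow_pos (by norm_num) _)]; ring
  -- tail
  set T : ℝ := ∑' i : ℕ, f (i + N) with hTdef
  have hsum' : Summable (fun i => f (i + N)) := (summable_nat_add_iff N).mpr hsum
  have hT : α - p / (q:ℝ) = T := by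
    have h1 : p / (q:ℝ) = ∑ n ∈ Finset.range N, f n := by
      rw [hp]; field_simp
    have h2 := Summable.sum_add_tsum_nat_add N hsum
    rw [hα, h1]
    linarith [h2]
  have hTpos : 0 < T :=
    Summable.tsum_pos hsum' (fun i => (hfpos _).le) 0 (hfpos _)
  have habs : |α - p / (q:ℝ)| = T := by rw [hT, abs_of_pos hTpos]
  -- f N = 1/(2q²)
  have hfN : f N = 1 / (2*(q:ℝ)^2) := by
    have e : 2^(N+1) = 2^N * 2 := by rw [pow_succ]
    rw [hfe, e, pow_mul, ← h2q]
    field_simp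
  constructor
  · -- lower bound
    rw [habs]
    have h2 := Summable.sum_add_tsum_nat_add 1 hsum'
    have h3 : ∑ i ∈ Finset.range 1, f (i + N) = f N := by simp
    have h4 : 0 < ∑' i : ℕ, f (i + 1 + N) :=
      Summable.tsum_pos ((summable_nat_add_iff 1).mpr hsum') (fun i => (hfpos _).le) 0 (hfpos _)
    rw [← hfN]
    have : f N + ∑' i : ℕ, f (i + 1 + N) = T := by rw [hTdef, ← h2, h3]
    linarith
  · -- upper bound
    rw [habs]
    set r : ℝ := 1/(2*(q:ℝ)) with hr
    have hr0 : 0 < r := by positivity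
    have hr1 : r < 1 := by rw [hr]; rw [div_lt_one (by linarith)]; linarith
    have hfNk : ∀ i, f (i + N) = 2 * r^(2^(i+1)) := by
      intro i
      have e : 2^(i + N + 1) = 2^N * 2^(i+1) := by rw [← pow_add]; ring_nf
      rw [hfe, e, pow_mul, ← h2q, hr]
      rw [div_pow, one_pow]
      ring
    set g : ℕ → ℝ := fun i => 2 * r^(i+2) with hg
    have hle2 : ∀ i, f (i + N) ≤ g i := by
      intro i
      rw [hfNk]
      show 2 * r^(2^(i+1)) ≤ 2 * r^(i+2)
      have : r^(2^(i+1)) ≤ r^(i+2) := by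
        apply pow_le_pow_of_le_one hr0.le hr1.le
        have := Nat.lt_two_pow_self (n := i+1)
        omega
      linarith
    have hstrict : f (1 + N) < g 1 := by
      rw [hfNk]
      show 2 * r^(2^(1+1)) < 2 * r^(1+2)
      have h4 : r^(2^(1+1)) < r^(1+2) :=
        pow_lt_pow_right_of_lt_one₀ hr0 hr1 (by norm_num)
      linarith
    have hge : g = fun i => (2*r^2) * r^i := by
      funext i; rw [hg]; simp only [pow_add]; ring
    have hsumg : Summable g := by
      rw [hge]
      exact (summable_geometric_of_lt_one hr0.le hr1).mul_left _
    have hTlt : T < ∑' i, g i := Summable.tsum_lt_tsum hle2 hstrict hsum' hsumg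
    have hgsum : ∑' i, g i = 2*r^2 * (1-r)⁻¹ := by
      rw [hge, tsum_mul_left, tsum_geometric_of_lt_one hr0.le hr1]
    have hfin : 2*r^2 * (1-r)⁻¹ = 1 / ((q : ℝ) ^ 2 * (2 - 1 / (q : ℝ))) := by
      rw [hr]; exact aux_value (q:ℝ) hq1
    rw [hgsum, hfin] at hTlt
    exact hTlt
end

section
/- Let A and N be positive integers, let α = Σ_{n=1}^{∞} 1/(2^{2ⁿ}·A^{2ⁿ}), let q = 2^{2ᴺ}·A^{2ᴺ} and p = q·Σ_{n=1}^{N} 1/(2^{2ⁿ}·A^{2ⁿ}). Then 1/q² < |α − p/q| < 1/((1 − 1/(2q))·q²). -/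
/-- The estimates behind Example 3: for `α = Σ_{n≥1} 1/(2^(2ⁿ)·A^(2ⁿ))`,
`q = 2^(2ᴺ)·A^(2ᴺ)` and `p = q·(N-th partial sum)`, one has
`1/q² < |α - p/q| < 1/((1 - 1/(2q))·q²)`. -/
theorem example_three_estimates (A N : ℕ) (hA : 0 < A) (hN : 0 < N) (α : ℝ)
    (hα : α = ∑' n : ℕ, 1 / ((2 : ℝ) ^ (2 ^ (n + 1)) * (A : ℝ) ^ (2 ^ (n + 1))))
    (q : ℕ) (hq : q = 2 ^ (2 ^ N) * A ^ (2 ^ N)) (p : ℝ)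
    (hp : p = (q : ℝ) *
      ∑ n ∈ Finset.range N, 1 / ((2 : ℝ) ^ (2 ^ (n + 1)) * (A : ℝ) ^ (2 ^ (n + 1)))) :
    1 / (q : ℝ) ^ 2 < |α - p / (q : ℝ)| ∧
      |α - p / (q : ℝ)| < 1 / ((1 - 1 / (2 * (q : ℝ))) * (q : ℝ) ^ 2) := by
  have hA1 : (1 : ℝ) ≤ (A : ℝ) := by exact_mod_cast hA
  set B : ℝ := 2 * (A : ℝ) with hBdef
  have hB2 : (2 : ℝ) ≤ B := by nlinarith
  have hB0 : (0 : ℝ) < B := by linarith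
  have hB1 : (1 : ℝ) ≤ B := by linarith
  set g : ℕ → ℝ := fun n => 1 / B ^ (2 ^ (n + 1)) with hgdef
  have hgterm : ∀ n : ℕ, 1 / ((2 : ℝ) ^ (2 ^ (n + 1)) * (A : ℝ) ^ (2 ^ (n + 1))) = g n := by
    intro n
    simp only [hgdef, hBdef, mul_pow]
  have hgpos : ∀ n, 0 < g n := fun n => by
    simp only [hgdef]
    positivity
  -- summability
  have hsum : Summable g := by
    apply Summable.of_nonneg_of_le (fun n => (hgpos n).le) (fun n => ?_)
      (summable_geometric_of_lt_one (by norm_num) (by norm_num : (1 / 2 : ℝ) < 1))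
    have hexp : n ≤ 2 ^ (n + 1) :=
      le_of_lt (Nat.lt_of_lt_of_le (Nat.lt_two_pow_self (n := n)) (Nat.pow_le_pow_right (by norm_num) (Nat.le_succ n)))
    have h1 : (2 : ℝ) ^ n ≤ B ^ (2 ^ (n + 1)) :=
      calc (2 : ℝ) ^ n ≤ (2 : ℝ) ^ (2 ^ (n + 1)) := pow_le_pow_right₀ one_le_two hexp
        _ ≤ B ^ (2 ^ (n + 1)) := pow_le_pow_left₀ (by norm_num) hB2 _
    rw [one_div_pow]
    exact one_div_le_one_div_of_le (by positivity) h1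
  -- facts about q
  have hqB : (q : ℝ) = B ^ (2 ^ N) := by
    rw [hq]
    push_cast
    rw [hBdef, mul_pow]
  have hq2 : (q : ℝ) ^ 2 = B ^ (2 ^ (N + 1)) := by
    rw [hqB, ← pow_mul, ← pow_succ]
  have hq4 : (4 : ℝ) ≤ (q : ℝ) := by
    rw [hqB]
    calc (4 : ℝ) = 2 ^ 2 := by norm_num
      _ ≤ (2 : ℝ) ^ (2 ^ N) := by
          apply pow_le_pow_right₀ one_le_two
          calc 2 = 2 ^ 1 := by norm_num
            _ ≤ 2 ^ N := Nat.pow_le_pow_right (by norm_num) hN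
      _ ≤ B ^ (2 ^ N) := pow_le_pow_left₀ (by norm_num) hB2 _
  have hq0 : (0 : ℝ) < (q : ℝ) := by linarith
  have he : (1 - 1 / (2 * (q : ℝ))) * (q : ℝ) ^ 2 = (q : ℝ) ^ 2 - (q : ℝ) / 2 := by
    have h2 : (2 : ℝ) * (q : ℝ) ≠ 0 := by positivity
    field_simp
  have hden1 : (0 : ℝ) < (1 - 1 / (2 * (q : ℝ))) * (q : ℝ) ^ 2 := by
    rw [he]
    clear * - hq4
    nlinarith
  have hdenlt : (1 - 1 / (2 * (q : ℝ))) * (q : ℝ) ^ 2 < (q : ℝ) ^ 2 - 1 := by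
    rw [he]
    clear * - hq4
    linarith
  -- rewrite α - p/q as a tail sum
  have hpq : p / (q : ℝ) = ∑ n ∈ Finset.range N, g n := by
    rw [hp, mul_div_assoc, mul_div_cancel₀ _ (ne_of_gt hq0)]
    exact Finset.sum_congr rfl fun n _ => hgterm n
  have hαg : α = ∑' n, g n := by
    rw [hα]
    exact tsum_congr hgterm
  have hsplit : ∑ n ∈ Finset.range N, g n + ∑' k, g (k + N) = ∑' n, g n :=
    Summable.sum_add_tsum_nat_add N hsum
  have key : α - p / (q : ℝ) = ∑' k, g (k + N) := by
    rw [hαg, hpq]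
    linarith
  set T : ℝ := ∑' k, g (k + N) with hTdef
  -- summability of tails
  have hsumT : Summable fun k => g (k + N) := (summable_nat_add_iff N).2 hsum
  have hsumT' : Summable fun k => g (k + 1 + N) := by
    have he : (fun k => g (k + 1 + N)) = fun k => g (k + (N + 1)) := by
      funext k; congr 1; omega
    rw [he]
    exact (summable_nat_add_iff (N + 1)).2 hsum
  -- lower bound
  have hTsplit : T = g (0 + N) + ∑' k, g (k + 1 + N) := Summable.tsum_eq_zero_add hsumT
  have hrest : 0 < ∑' k, g (k + 1 + N) :=
    Summable.tsum_pos hsumT' (fun k => (hgpos _).le) 0 (hgpos _)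
  have hgN : g N = 1 / (q : ℝ) ^ 2 := by
    rw [hq2]
  have hlow : 1 / (q : ℝ) ^ 2 < T := by
    rw [← hgN]
    have : g (0 + N) = g N := by norm_num
    rw [hTsplit, this]
    linarith
  have hT0 : 0 < T := lt_trans (by positivity) hlow
  -- upper bound: termwise comparison with geometric series
  have hr0 : 0 < g N := hgpos N
  have hr1 : g N < 1 := by
    rw [hgN]
    rw [div_lt_one (by positivity)]
    clear * - hq4
    nlinarith
  have hterm_le : ∀ k : ℕ, g (k + N) ≤ (g N) ^ (k + 1) := by
    intro k
    have hrpow : (g N) ^ (k + 1) = 1 / B ^ (2 ^ (N + 1) * (k + 1)) := by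
      simp only [hgdef]
      rw [one_div_pow, ← pow_mul]
    rw [hrpow]
    simp only [hgdef]
    apply one_div_le_one_div_of_le (by positivity)
    apply pow_le_pow_right₀ hB1
    calc 2 ^ (N + 1) * (k + 1) ≤ 2 ^ (N + 1) * 2 ^ k :=
          Nat.mul_le_mul_left _ (Nat.lt_two_pow_self (n := k))
      _ = 2 ^ (k + N + 1) := by rw [← pow_add]; congr 1; omega
  have hgeo : Summable fun k : ℕ => (g N) ^ (k + 1) := by
    have he : (fun k : ℕ => (g N) ^ (k + 1)) = fun k : ℕ => g N * (g N) ^ k := by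
      funext k; rw [pow_succ, mul_comm]
    rw [he]
    exact (summable_geometric_of_lt_one hr0.le hr1).mul_left (g N)
  have hgeosum : ∑' k : ℕ, (g N) ^ (k + 1) = g N / (1 - g N) := by
    have he : (fun k : ℕ => (g N) ^ (k + 1)) = fun k : ℕ => g N * (g N) ^ k := by
      funext k; rw [pow_succ, mul_comm]
    rw [he, tsum_mul_left, tsum_geometric_of_lt_one hr0.le hr1, div_eq_mul_inv]
  have hTle : T ≤ g N / (1 - g N) := by
    rw [← hgeosum]
    exact Summable.tsum_le_tsum hterm_le hsumT hgeo
  -- final arithmetic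
  have hx2 : (1 : ℝ) < (q : ℝ) ^ 2 := by clear * - hq4; nlinarith
  have hreq : g N / (1 - g N) = 1 / ((q : ℝ) ^ 2 - 1) := by
    have h2 : (q : ℝ) ^ 2 ≠ 0 := by positivity
    have h3 : (q : ℝ) ^ 2 - 1 ≠ 0 := by clear * - hx2; nlinarith
    rw [hgN]
    field_simp
  have hupp : T < 1 / ((1 - 1 / (2 * (q : ℝ))) * (q : ℝ) ^ 2) := by
    calc T ≤ g N / (1 - g N) := hTle
      _ = 1 / ((q : ℝ) ^ 2 - 1) := hreq
      _ < 1 / ((1 - 1 / (2 * (q : ℝ))) * (q : ℝ) ^ 2) :=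
          one_div_lt_one_div_of_lt hden1 hdenlt
  rw [key, abs_of_pos hT0]
  exact ⟨hlow, hupp⟩
end
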